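/- arXiv:1502.03969 — 9 statements merged into one kernel-verified Lean document; each statement's English description precedes it below -/
import Mathlib

section
/- Let N ≥ 2 be an integer and let p, μ, m be real numbers with 1 < p < N, 0 ≤ μ < μ̄ := ((N−p)/p)^p and m > 0. Let f : ℝ → ℝ be continuous and satisfy (F). Let u : (0,∞) → ℝ be a radial profile solution of the equation (hypothesis (S)) that also satisfies (W). Define w(r) = −r^{p−1}|u'(r)|^{p−2}u'(r)/u(r)^{p−1} for r > 0. Then w(r) → γ₁^{p−1} as r → 0+, where γ₁ is the unique zero of Γ_μ in [0, (N−p)/p). -/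
/-!
Put `Φ = riccatiPhi p N μ`, so that `Γ_μ(γ) = Φ(γ ^ (p - 1))`. In terms of
`w = -r^{p-1}|u'|^{p-2}u'/u^{p-1}` the equation (S) is the Riccati equation
`r w' = Φ(w) - r^p (m - f(u)/u^{p-1})`, and by (F) and (W) the perturbation tends to `0`; in the
variable `s = -log r` it reads `v' = ℓ(s) - Φ(v)` with `ℓ → 0`. The function `Φ` is convex,
vanishes at `γ₁^{p-1}` and is negative at `((N-p)/p)^{p-1}`, hence at some `B` beyond it.
As `s → ∞`, `v` cannot fall below `γ₁^{p-1} - ε`: it would be driven to `-∞`, where `Φ` grows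
superlinearly, and blow up in finite time. Nor can it return above `γ₁^{p-1} + ε` for large `s`:
it would then be trapped above `B`, forcing `u(r) ≳ r^{-B^{1/(p-1)}}` as `r → 0`, with
`B^{1/(p-1)} > (N-p)/p`, against `u(r) r^{(N-p)/p} → 0`.
-/

open Filter Topology MeasureTheory Set Real

section OnHalfLine

variable {v v' : ℝ → ℝ} {a : ℝ}

lemma le_of_deriv_pos_at_eq (hv : ∀ s ≥ a, HasDerivAt v (v' s) s) {c : ℝ} (ha : c ≤ v a)
    (hc : ∀ s ≥ a, v s = c → 0 < v' s) {s : ℝ} (hs : a ≤ s) : c ≤ v s :=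
  image_le_of_deriv_right_lt_deriv_boundary' (f' := fun _ => 0) continuousOn_const
    (fun _ _ => hasDerivWithinAt_const _ _ _) ha
    (fun t ht => (hv t ht.1).continuousAt.continuousWithinAt)
    (fun t ht => (hv t ht.1).hasDerivWithinAt) (fun t ht h => hc t ht.1 h.symm)
    ⟨hs, le_rfl⟩

lemma add_mul_sub_le_of_le_deriv (hv : ∀ s ≥ a, HasDerivAt v (v' s) s) {η : ℝ}
    (hη : ∀ s ≥ a, η ≤ v' s) {s : ℝ} (hs : a ≤ s) : v a + η * (s - a) ≤ v s := by
  have := (convex_Ici a).mul_sub_le_image_sub_of_le_deriv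
    (fun t ht => (hv t ht).continuousAt.continuousWithinAt)
    (fun t ht => (hv t (interior_subset ht)).differentiableAt.differentiableWithinAt)
    (fun t ht => (hv t (interior_subset ht)).deriv ▸ hη t (interior_subset ht))
    a (mem_Ici.2 le_rfl) s hs hs
  linarith

lemma exists_forall_le_of_le_deriv_on_Icc (hv : ∀ s ≥ a, HasDerivAt v (v' s) s)
    {c B η : ℝ} (hη : 0 < η) (hcB : c ≤ B) (ha : c ≤ v a)
    (hspeed : ∀ s ≥ a, v s ∈ Icc c B → η ≤ v' s) : ∃ b ≥ a, ∀ s ≥ b, B ≤ v s := by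
  by_cases hreach : ∃ b ≥ a, B ≤ v b
  · obtain ⟨b, hab, hb⟩ := hreach
    refine ⟨b, hab, fun s hs => le_of_deriv_pos_at_eq (fun t ht => hv t (hab.trans ht)) hb
      (fun t ht h => hη.trans_le (hspeed t (hab.trans ht) (by rw [h]; exact ⟨hcB, le_rfl⟩))) hs⟩
  push Not at hreach
  have htrap : ∀ s ≥ a, v s ∈ Icc c B := fun s hs =>
    ⟨le_of_deriv_pos_at_eq hv ha
      (fun t ht h => hη.trans_le (hspeed t ht (by rw [h]; exact ⟨le_rfl, hcB⟩))) hs,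
      (hreach s hs).le⟩
  set s := a + (B - c) / η
  have hs : a ≤ s := le_add_of_nonneg_right (div_nonneg (sub_nonneg.2 hcB) hη.le)
  have := add_mul_sub_le_of_le_deriv hv (fun t ht => hspeed t ht (htrap t ht)) hs
  rw [show s - a = (B - c) / η by ring, mul_div_cancel₀ _ hη.ne'] at this
  linarith [hreach s hs]

/-- Along such a solution `(-v) ^ (1 - q)` would decrease at a fixed rate while staying
positive. -/
lemma not_forall_deriv_le_neg_rpow (hv : ∀ s ≥ a, HasDerivAt v (v' s) s) {κ q : ℝ}
    (hκ : 0 < κ) (hq : 1 < q) (hneg : ∀ s ≥ a, v s < 0)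
    (hbound : ∀ s ≥ a, v' s ≤ -(κ * (-v s) ^ q)) : False := by
  set H : ℝ → ℝ := fun s => -(-v s) ^ (1 - q)
  have hH : ∀ s ≥ a, HasDerivAt H (-(-v' s * (1 - q) * (-v s) ^ (1 - q - 1))) s :=
    fun s hs => ((hv s hs).neg.rpow_const (Or.inl (neg_ne_zero.2 (hneg s hs).ne))).neg
  have hspeed : ∀ s ≥ a, κ * (q - 1) ≤ -(-v' s * (1 - q) * (-v s) ^ (1 - q - 1)) := by
    intro s hs
    have hpos : 0 < -v s := neg_pos.2 (hneg s hs)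
    have hcancel : (-v s) ^ (1 - q - 1) * (-v s) ^ q = 1 := by
      rw [← rpow_add hpos, show 1 - q - 1 + q = 0 by ring, rpow_zero]
    have := mul_le_mul_of_nonneg_left (hbound s hs)
      (by positivity : 0 ≤ (q - 1) * (-v s) ^ (1 - q - 1))
    linear_combination this - (q - 1) * κ * hcancel
  set s := a + ((-v a) ^ (1 - q) + 1) / (κ * (q - 1))
  have hκq : 0 < κ * (q - 1) := mul_pos hκ (by linarith)
  have hs : a ≤ s := le_add_of_nonneg_right <| div_nonneg
    (add_nonneg (rpow_pos_of_pos (neg_pos.2 (hneg a le_rfl)) _).le zero_le_one) hκq.le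
  have hdecay := add_mul_sub_le_of_le_deriv hH hspeed hs
  rw [show s - a = ((-v a) ^ (1 - q) + 1) / (κ * (q - 1)) by ring,
    mul_div_cancel₀ _ hκq.ne'] at hdecay
  simp only [H] at hdecay
  linarith [rpow_pos_of_pos (neg_pos.2 (hneg s hs)) (1 - q)]

lemma tendsto_mul_exp_neg_mul_atTop (hv : ∀ s ≥ a, HasDerivAt v (v' s) s)
    (hpos : ∀ s ≥ a, 0 < v s) {β γ : ℝ} (hβγ : β < γ) (hgrow : ∀ s ≥ a, γ * v s ≤ v' s) :
    Tendsto (fun s => v s * exp (-(β * s))) atTop atTop := by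
  have hlog : ∀ s ≥ a, HasDerivAt (fun t => log (v t)) (v' s / v s) s :=
    fun s hs => (hv s hs).log (hpos s hs).ne'
  have hrate : ∀ s ≥ a, γ ≤ v' s / v s := fun s hs => (le_div_iff₀ (hpos s hs)).2 (hgrow s hs)
  have hlin : Tendsto (fun s => log (v a) - γ * a + (γ - β) * s) atTop atTop :=
    tendsto_atTop_add_const_left _ _ (tendsto_id.const_mul_atTop (sub_pos.2 hβγ))
  refine tendsto_atTop_mono' _ ?_ (tendsto_exp_atTop.comp hlin)
  filter_upwards [eventually_ge_atTop a] with s hs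
  have := add_mul_sub_le_of_le_deriv hlog hrate hs
  rw [Function.comp_apply, ← exp_log (hpos s hs), ← exp_add]
  exact exp_le_exp.2 (by linarith)

end OnHalfLine

section ConvexZero

variable {f : ℝ → ℝ} (hf : ConvexOn ℝ univ f) {a b : ℝ} (ha : f a = 0) (hb : f b < 0)
include hf ha hb

lemma ConvexOn.neg_of_mem_Ioc_of_eq_zero {x : ℝ} (hx : x ∈ Ioc a b) : f x < 0 := by
  rcases hx.2.lt_or_eq with hxb | rfl
  · have := hf.slope_mono_adjacent (mem_univ a) (mem_univ b) hx.1 hxb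
    rw [ha, sub_zero, div_le_div_iff₀ (sub_pos.2 hx.1) (sub_pos.2 hxb)] at this
    nlinarith [sub_pos.2 hx.1, sub_pos.2 hxb]
  · exact hb

lemma ConvexOn.pos_of_lt_of_eq_zero (hab : a < b) {x : ℝ} (hxa : x < a) : 0 < f x := by
  have := hf.slope_mono_adjacent (mem_univ x) (mem_univ b) hxa hab
  rw [ha, div_le_div_iff₀ (sub_pos.2 hxa) (sub_pos.2 hab)] at this
  nlinarith [sub_pos.2 hxa, sub_pos.2 hab]

lemma ConvexOn.le_of_le_of_lt_of_eq_zero (hab : a < b) {x y : ℝ} (hxy : x ≤ y) (hya : y < a) :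
    f y ≤ f x := by
  rcases hxy.lt_or_eq with hxy | rfl
  · have := hf.slope_mono_adjacent (mem_univ x) (mem_univ a) hxy hya
    rw [ha, div_le_div_iff₀ (sub_pos.2 hxy) (sub_pos.2 hya)] at this
    nlinarith [sub_pos.2 hxy, sub_pos.2 hya, hf.pos_of_lt_of_eq_zero ha hb hab hya]
  · exact le_rfl

end ConvexZero

lemma convexOn_abs_rpow {q : ℝ} (hq : 1 ≤ q) : ConvexOn ℝ univ fun x : ℝ => |x| ^ q := by
  refine ⟨convex_univ, fun x _ y _ a b ha hb hab => ?_⟩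
  have htri : |a • x + b • y| ≤ a • |x| + b • |y| := by
    simpa [abs_mul, abs_of_nonneg ha, abs_of_nonneg hb] using abs_add_le (a * x) (b * y)
  calc |a • x + b • y| ^ q ≤ (a • |x| + b • |y|) ^ q :=
        rpow_le_rpow (abs_nonneg _) htri (by linarith)
    _ ≤ a • |x| ^ q + b • |y| ^ q :=
        (convexOn_rpow hq).2 (abs_nonneg x) (abs_nonneg y) ha hb hab

noncomputable def riccatiPhi (p n μ x : ℝ) : ℝ :=
  (p - 1) * |x| ^ (p / (p - 1)) - (n - p) * x + μ

section RiccatiPhi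

variable {p n μ : ℝ}

lemma one_lt_div_sub_one (hp : 1 < p) : 1 < p / (p - 1) := by
  rw [lt_div_iff₀ (by linarith)]; linarith

lemma continuous_riccatiPhi (hp : 1 < p) : Continuous (riccatiPhi p n μ) := by
  have hq : 0 ≤ p / (p - 1) := by linarith [one_lt_div_sub_one hp]
  exact (((continuous_abs.rpow_const fun _ => Or.inr hq).const_mul _).sub
    (continuous_const_mul _)).add continuous_const

lemma convexOn_riccatiPhi (hp : 1 < p) : ConvexOn ℝ univ (riccatiPhi p n μ) := by
  have := (((convexOn_abs_rpow (one_lt_div_sub_one hp).le).smul (by linarith : (0:ℝ) ≤ p - 1)).sub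
    ((LinearMap.mulLeft ℝ (n - p)).concaveOn convex_univ)).add_const μ
  exact this.congr fun x _ => by simp [riccatiPhi]

lemma riccatiPhi_rpow_sub_one (hp : 1 < p) {γ : ℝ} (hγ : 0 ≤ γ) :
    riccatiPhi p n μ (γ ^ (p - 1)) = γ ^ (p - 1) * ((p - 1) * γ - (n - p)) + μ := by
  have hcol : (γ ^ (p - 1)) ^ (p / (p - 1)) = γ ^ (p - 1) * γ := by
    rw [← rpow_mul hγ, mul_div_cancel₀ _ (by linarith : p - 1 ≠ 0),
      ← rpow_add_one' hγ (by linarith), sub_add_cancel]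
  rw [riccatiPhi, abs_of_nonneg (rpow_nonneg hγ _), hcol]
  ring

lemma mul_abs_rpow_le_riccatiPhi (hpn : p ≤ n) (hμ : 0 ≤ μ) {x : ℝ} (hx : x ≤ 0) :
    (p - 1) * |x| ^ (p / (p - 1)) ≤ riccatiPhi p n μ x := by
  unfold riccatiPhi; nlinarith

end RiccatiPhi

section SignedPower

variable {p : ℝ}

lemma abs_rpow_sub_two_mul_abs (hp : p ≠ 1) (x : ℝ) : |x| ^ (p - 2) * |x| = |x| ^ (p - 1) := by
  rw [← rpow_add_one' (abs_nonneg x) (by contrapose! hp; linarith)]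
  ring_nf

lemma abs_abs_rpow_sub_two_mul (hp : p ≠ 1) (x : ℝ) : |(|x| ^ (p - 2) * x)| = |x| ^ (p - 1) := by
  rw [abs_mul, abs_of_nonneg (rpow_nonneg (abs_nonneg x) _), abs_rpow_sub_two_mul_abs hp]

lemma abs_rpow_sub_two_mul_mul_self (hp : 1 < p) (x : ℝ) : |x| ^ (p - 2) * x * x = |x| ^ p := by
  rw [mul_assoc, ← abs_mul_abs_self, ← mul_assoc, abs_rpow_sub_two_mul_abs hp.ne',
    ← rpow_add_one' (abs_nonneg x) (by linarith)]
  ring_nf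

variable (hp : 1 < p) {r y w : ℝ} (hr : 0 < r) (hy : 0 < y) {x : ℝ}
  (hw : w = -(r ^ (p - 1) * |x| ^ (p - 2) * x) / y ^ (p - 1))
include hp hr hy hw

lemma abs_eq_rpow_of_eq_neg_div : |w| = (r * |x| / y) ^ (p - 1) := by
  rw [hw, abs_div, abs_neg, abs_of_pos (rpow_pos_of_pos hy _), mul_assoc, abs_mul,
    abs_of_pos (rpow_pos_of_pos hr _), abs_abs_rpow_sub_two_mul (by linarith) x,
    div_rpow (by positivity) hy.le, mul_rpow hr.le (abs_nonneg _)]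

lemma rpow_mul_le_neg_mul_of_le {B : ℝ} (hB : 0 < B) (hBw : B ≤ w) :
    B ^ (1 / (p - 1)) * y ≤ -(r * x) := by
  have hx : x < 0 := by
    by_contra! hx
    have : w ≤ 0 := by
      rw [hw]
      exact div_nonpos_of_nonpos_of_nonneg (neg_nonpos.2 (mul_nonneg (by positivity) hx))
        (by positivity)
    linarith
  have hle : B ^ (1 / (p - 1)) ≤ |w| ^ (1 / (p - 1)) :=
    rpow_le_rpow hB.le (hBw.trans (le_abs_self w)) (one_div_nonneg.2 (by linarith))
  rw [abs_eq_rpow_of_eq_neg_div hp hr hy hw, ← rpow_mul (by positivity),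
    mul_one_div_cancel (by linarith), rpow_one, abs_of_neg hx, le_div_iff₀ hy] at hle
  linarith

end SignedPower

section RadialEquation

variable {p n μ m : ℝ} {f u u' w : ℝ → ℝ}

lemma hasDerivAt_riccati (hp : 1 < p)
    (hu_pos : ∀ r : ℝ, 0 < r → 0 < u r)
    (hu' : ∀ r : ℝ, 0 < r → HasDerivAt u (u' r) r)
    (hS : ∀ r : ℝ, 0 < r →
      HasDerivAt (fun s : ℝ => s ^ (n - 1) * |u' s| ^ (p - 2) * u' s)
        (-(r ^ (n - 1) * (μ / r ^ p * u r ^ (p - 1) - m * u r ^ (p - 1) + f (u r)))) r)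
    (hw : ∀ r : ℝ, 0 < r → w r = -(r ^ (p - 1) * |u' r| ^ (p - 2) * u' r) / u r ^ (p - 1))
    {r : ℝ} (hr : 0 < r) :
    HasDerivAt w ((riccatiPhi p n μ (w r) - r ^ p * (m - f (u r) / u r ^ (p - 1))) / r) r := by
  have hu := hu_pos r hr
  set g : ℝ → ℝ := fun s => s ^ (n - 1) * |u' s| ^ (p - 2) * u' s
  have hw_eq : w =ᶠ[𝓝 r] fun s => -(s ^ (p - n) * g s / u s ^ (p - 1)) := by
    filter_upwards [Ioi_mem_nhds hr] with s hs
    rw [hw s hs, show s ^ (p - 1) = s ^ (p - n) * s ^ (n - 1) by rw [← rpow_add hs]; ring_nf]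
    ring
  refine ((((hasDerivAt_rpow_const (Or.inl hr.ne')).mul (hS r hr)).div
    ((hu' r hr).rpow_const (Or.inl hu.ne')) (rpow_pos_of_pos hu _).ne').neg.congr_of_eventuallyEq
    hw_eq).congr_deriv ?_
  have hpow : |w r| ^ (p / (p - 1)) = r ^ p * |u' r| ^ p / u r ^ p := by
    rw [abs_eq_rpow_of_eq_neg_div hp hr hu (hw r hr), ← rpow_mul (by positivity),
      mul_div_cancel₀ _ (by linarith : p - 1 ≠ 0), div_rpow (by positivity) hu.le,
      mul_rpow hr.le (abs_nonneg _)]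
  have hr1 : r ^ (p - n - 1) = r ^ (p - n) / r := rpow_sub_one hr.ne' _
  have hrp : r ^ p = r ^ (p - n) * r ^ (n - 1) * r := by
    rw [← rpow_add hr, ← rpow_add_one hr.ne']; ring_nf
  have hrp1 : r ^ (p - 1) = r ^ (p - n) * r ^ (n - 1) := by rw [← rpow_add hr]; ring_nf
  have hu1 : u r ^ (p - 1 - 1) = u r ^ (p - 1) / u r := rpow_sub_one hu.ne' _
  have hup : u r ^ p = u r ^ (p - 1) * u r := by rw [← rpow_add_one hu.ne']; ring_nf
  have : r ^ (p - n) ≠ 0 := (rpow_pos_of_pos hr _).ne'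
  have : r ^ (n - 1) ≠ 0 := (rpow_pos_of_pos hr _).ne'
  have : u r ^ (p - 1) ≠ 0 := (rpow_pos_of_pos hu _).ne'
  rw [riccatiPhi, hpow, hw r hr, ← abs_rpow_sub_two_mul_mul_self hp]
  simp only [Pi.mul_apply, g, hr1, hrp, hrp1, hu1, hup]
  field_simp
  ring

end RadialEquation

lemma abs_div_rpow_le_of_growth {f : ℝ → ℝ} {p A t₀ q k : ℝ} (hA : 0 ≤ A) (hpq : p ≤ q)
    (ht₀ : 0 ≤ t₀)
    (hf₀ : ∀ t : ℝ, |t| ≤ t₀ → |f t| ≤ A * |t| ^ (q - 1))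
    (hf₁ : ∀ t : ℝ, t₀ ≤ |t| → |f t| ≤ A * |t| ^ (k - 1)) {t : ℝ} (ht : 0 < t) :
    |f t| / t ^ (p - 1) ≤ A * t₀ ^ (q - p) + A * t ^ (k - p) := by
  have hdiv : ∀ e, t ^ (e - 1) / t ^ (p - 1) = t ^ (e - p) := fun e => by
    rw [← rpow_sub ht]; ring_nf
  rcases le_total t t₀ with htt₀ | htt₀
  · have h := hf₀ t (by rwa [abs_of_pos ht])
    rw [abs_of_pos ht] at h
    calc |f t| / t ^ (p - 1) ≤ A * (t ^ (q - 1) / t ^ (p - 1)) := by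
          rw [mul_div_assoc']; gcongr
      _ ≤ A * t₀ ^ (q - p) := by
          rw [hdiv]; gcongr
      _ ≤ _ := le_add_of_nonneg_right (by positivity)
  · have h := hf₁ t (by rwa [abs_of_pos ht])
    rw [abs_of_pos ht] at h
    calc |f t| / t ^ (p - 1) ≤ A * (t ^ (k - 1) / t ^ (p - 1)) := by
          rw [mul_div_assoc']; gcongr
      _ = A * t ^ (k - p) := by rw [hdiv]
      _ ≤ _ := le_add_of_nonneg_left (by positivity)

lemma tendsto_rpow_mul_sub_div_rpow {n p m A q t₀ : ℝ} {f u : ℝ → ℝ} (hp : 1 < p) (hpn : p < n)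
    (hA : 0 ≤ A) (hpq : p ≤ q) (ht₀ : 0 ≤ t₀)
    (hf₀ : ∀ t : ℝ, |t| ≤ t₀ → |f t| ≤ A * |t| ^ (q - 1))
    (hf₁ : ∀ t : ℝ, t₀ ≤ |t| → |f t| ≤ A * |t| ^ (n * p / (n - p) - 1))
    (hu_pos : ∀ r : ℝ, 0 < r → 0 < u r)
    (hW2 : Tendsto (fun r : ℝ => u r * r ^ ((n - p) / p)) (𝓝[>] 0) (𝓝 0)) :
    Tendsto (fun r => r ^ p * (m - f (u r) / u r ^ (p - 1))) (𝓝[>] 0) (𝓝 0) := by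
  have hp0 : 0 < p := by linarith
  have hnp : 0 < n - p := by linarith
  have hk : 0 < n * p / (n - p) - p := by
    rw [sub_pos, lt_div_iff₀ hnp]; nlinarith
  have hrp : Tendsto (fun r : ℝ => r ^ p) (𝓝[>] 0) (𝓝 0) :=
    (tendsto_id.mono_left nhdsWithin_le_nhds).rpow_const_nhds_zero hp0
  have hbound : ∀ᶠ r in 𝓝[>] (0 : ℝ), ‖r ^ p * (f (u r) / u r ^ (p - 1))‖ ≤
      A * t₀ ^ (q - p) * r ^ p + A * (u r * r ^ ((n - p) / p)) ^ (n * p / (n - p) - p) := by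
    filter_upwards [self_mem_nhdsWithin] with r (hr : 0 < r)
    have hu := hu_pos r hr
    -- `p* - p` is exactly the exponent for which `r ^ p` is absorbed into `u r * r ^ ((n-p)/p)`
    have hscale : (u r * r ^ ((n - p) / p)) ^ (n * p / (n - p) - p)
        = r ^ p * u r ^ (n * p / (n - p) - p) := by
      rw [mul_rpow hu.le (rpow_nonneg hr.le _), ← rpow_mul hr.le, mul_comm]
      congr 2
      field_simp
      ring
    rw [hscale, norm_mul, norm_div, Real.norm_eq_abs, Real.norm_eq_abs, Real.norm_eq_abs,
      abs_of_pos (rpow_pos_of_pos hr _), abs_of_pos (rpow_pos_of_pos hu _)]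
    have := abs_div_rpow_le_of_growth hA hpq ht₀ hf₀ hf₁ hu
    nlinarith [rpow_pos_of_pos hr p]
  have hlim := (hrp.const_mul (A * t₀ ^ (q - p))).add ((hW2.rpow_const_nhds_zero hk).const_mul A)
  rw [mul_zero, mul_zero, add_zero] at hlim
  have := (hrp.mul_const m).sub (squeeze_zero_norm' hbound hlim)
  rw [zero_mul, sub_zero] at this
  exact this.congr fun r => by ring

section RiccatiAsymptotics

variable {Φ v ℓ : ℝ → ℝ} {w₁ B : ℝ} (hΦ : ConvexOn ℝ univ Φ) (hw₁ : Φ w₁ = 0) (hB : Φ B < 0)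
  (hw₁B : w₁ < B) (hv : ∀ s, HasDerivAt v (ℓ s - Φ (v s)) s) (hℓ : Tendsto ℓ atTop (𝓝 0))
include hΦ hw₁ hB hw₁B hv hℓ

lemma eventually_lt_of_riccati (hescape : ¬ ∃ b, ∀ s ≥ b, B ≤ v s) {c : ℝ} (hc : w₁ < c) :
    ∀ᶠ s in atTop, v s < c := by
  set c' := min c B
  have hc'B : c' ≤ B := min_le_right _ _
  have hΦc' : Φ c' < 0 := hΦ.neg_of_mem_Ioc_of_eq_zero hw₁ hB ⟨lt_min hc hw₁B, hc'B⟩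
  set η := min (-Φ c') (-Φ B)
  have hη : 0 < η := lt_min (neg_pos.2 hΦc') (neg_pos.2 hB)
  have hΦη : ∀ x ∈ Icc c' B, Φ x ≤ -η := fun x hx =>
    (hΦ.le_max_of_mem_Icc (mem_univ _) (mem_univ _) hx).trans
      (max_le (by linarith [min_le_left (-Φ c') (-Φ B)])
        (by linarith [min_le_right (-Φ c') (-Φ B)]))
  obtain ⟨S, hS⟩ := eventually_atTop.1 (hℓ.eventually (lt_mem_nhds (neg_lt_zero.2 (half_pos hη))))
  refine eventually_atTop.2 ⟨S, fun s₀ hs₀ => not_le.1 fun hcv => hescape ?_⟩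
  obtain ⟨b, -, hb⟩ := exists_forall_le_of_le_deriv_on_Icc (a := s₀) (fun s _ => hv s)
    (half_pos hη) hc'B ((min_le_left _ _).trans hcv)
    (fun s hs hvs => by linarith [hΦη _ hvs, hS s (hs₀.trans hs)])
  exact ⟨b, hb⟩

lemma eventually_gt_of_riccati {κ q : ℝ} (hκ : 0 < κ) (hq : 1 < q)
    (hΦneg : ∀ x ≤ 0, κ * |x| ^ q ≤ Φ x) {c : ℝ} (hc : c < w₁) : ∀ᶠ s in atTop, c < v s := by
  set η := Φ c
  have hη : 0 < η := hΦ.pos_of_lt_of_eq_zero hw₁ hB hw₁B hc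
  have hΦη : ∀ x ≤ c, η ≤ Φ x := fun x hx => hΦ.le_of_le_of_lt_of_eq_zero hw₁ hB hw₁B hx hc
  obtain ⟨S, hS⟩ := eventually_atTop.1
    (hℓ.eventually (gt_mem_nhds (half_pos (lt_min hη hκ))))
  refine eventually_atTop.2 ⟨S, fun s₀ hs₀ => not_le.1 fun hvc => ?_⟩
  -- `v` is pushed below `min c (-1)`, after which `v' ≤ -(κ/2) (-v)^q` blows up in finite time
  obtain ⟨b, hb, hvb⟩ := exists_forall_le_of_le_deriv_on_Icc (a := s₀) (v := fun s => -v s)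
    (fun s _ => (hv s).neg) (half_pos hη) (le_max_left (-c) 1) (neg_le_neg hvc)
    (fun s hs hvs => by
      linarith [hΦη _ (neg_le_neg_iff.1 hvs.1), hS s (hs₀.trans hs), min_le_left η κ])
  refine not_forall_deriv_le_neg_rpow (a := b) (fun s _ => hv s) (half_pos hκ) hq
    (fun s hs => by linarith [hvb s hs, le_max_right (-c) 1]) fun s hs => ?_
  have hv1 : 1 ≤ -v s := (le_max_right _ _).trans (hvb s hs)
  have hpow : 1 ≤ (-v s) ^ q := one_le_rpow hv1 (by linarith)
  have := hΦneg (v s) (by linarith)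
  rw [abs_of_nonpos (by linarith)] at this
  linarith [hS s (hs₀.trans hb |>.trans hs), min_le_right η κ,
    mul_le_mul_of_nonneg_left hpow hκ.le]

lemma tendsto_of_riccati (hescape : ¬ ∃ b, ∀ s ≥ b, B ≤ v s) {κ q : ℝ} (hκ : 0 < κ) (hq : 1 < q)
    (hΦneg : ∀ x ≤ 0, κ * |x| ^ q ≤ Φ x) : Tendsto v atTop (𝓝 w₁) :=
  tendsto_order.2 ⟨fun _ hc => eventually_gt_of_riccati hΦ hw₁ hB hw₁B hv hℓ hκ hq hΦneg hc,
    fun _ hc => eventually_lt_of_riccati hΦ hw₁ hB hw₁B hv hℓ hescape hc⟩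

end RiccatiAsymptotics

lemma hasDerivAt_comp_exp_neg {w G : ℝ → ℝ} (hw : ∀ r : ℝ, 0 < r → HasDerivAt w (G r / r) r)
    (s : ℝ) : HasDerivAt (fun s => w (exp (-s))) (-G (exp (-s))) s := by
  refine ((hw _ (exp_pos (-s))).comp s (hasDerivAt_neg s).exp).congr_deriv ?_
  rw [mul_neg_one, mul_neg, div_mul_cancel₀ _ (exp_pos _).ne']

lemma exists_gt_riccatiPhi_neg {p n μ : ℝ} (hp : 1 < p) (hpn : p < n)
    (hμ : μ < ((n - p) / p) ^ p) : ∃ B, ((n - p) / p) ^ (p - 1) < B ∧ riccatiPhi p n μ B < 0 := by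
  have hβ : 0 < (n - p) / p := div_pos (by linarith) (by linarith)
  have hneg : riccatiPhi p n μ (((n - p) / p) ^ (p - 1)) < 0 := by
    rw [riccatiPhi_rpow_sub_one hp hβ.le, rpow_sub_one hβ.ne',
      show (p - 1) * ((n - p) / p) - (n - p) = -((n - p) / p) by field_simp; ring, mul_neg,
      div_mul_cancel₀ _ hβ.ne']
    linarith
  obtain ⟨B, hB, hwsB⟩ := (((continuous_riccatiPhi hp).tendsto _).eventually
    (gt_mem_nhds hneg) |>.filter_mono nhdsWithin_le_nhds |>.and
    (self_mem_nhdsWithin (s := Ioi (((n - p) / p) ^ (p - 1))))).exists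
  exact ⟨B, hwsB, hB⟩

lemma not_exists_forall_le_riccati {n p : ℝ} {u u' w : ℝ → ℝ} (hp : 1 < p) (hpn : p < n)
    (hu_pos : ∀ r : ℝ, 0 < r → 0 < u r)
    (hu' : ∀ r : ℝ, 0 < r → HasDerivAt u (u' r) r)
    (hw : ∀ r : ℝ, 0 < r → w r = -(r ^ (p - 1) * |u' r| ^ (p - 2) * u' r) / u r ^ (p - 1))
    (hW2 : Tendsto (fun r : ℝ => u r * r ^ ((n - p) / p)) (𝓝[>] 0) (𝓝 0))
    {B : ℝ} (hB : ((n - p) / p) ^ (p - 1) < B) : ¬ ∃ b, ∀ s ≥ b, B ≤ w (exp (-s)) := by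
  rintro ⟨b, hb⟩
  have hβ : 0 < (n - p) / p := div_pos (by linarith) (by linarith)
  have hB0 : 0 < B := (rpow_pos_of_pos hβ _).trans hB
  have hβγ : (n - p) / p < B ^ (1 / (p - 1)) := by
    have := rpow_lt_rpow (rpow_nonneg hβ.le _) hB (one_div_pos.2 (by linarith : 0 < p - 1))
    rwa [← rpow_mul hβ.le, mul_one_div_cancel (by linarith), rpow_one] at this
  have hgrow := tendsto_mul_exp_neg_mul_atTop (a := b)
    (fun s _ => (hu' _ (exp_pos (-s))).comp s (hasDerivAt_neg s).exp)
    (fun s _ => hu_pos _ (exp_pos _)) hβγ fun s hs => by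
      have := rpow_mul_le_neg_mul_of_le hp (exp_pos (-s)) (hu_pos _ (exp_pos _))
        (hw _ (exp_pos _)) hB0 (hb s hs)
      simp only [Function.comp_apply]
      linarith
  refine not_tendsto_nhds_of_tendsto_atTop hgrow 0 <|
    (hW2.comp (tendsto_exp_atBot_nhdsGT.comp tendsto_neg_atTop_atBot)).congr fun s => ?_
  simp only [Function.comp, ← exp_mul]
  ring_nf

theorem stmt_4_general
    (N : ℕ) (p μ m : ℝ)
    (hp1 : 1 < p) (hpN : p < N)
    (hμ0 : 0 ≤ μ) (hμ : μ < (((N : ℝ) - p) / p) ^ p)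
    (f : ℝ → ℝ)
    (hF : ∃ A > (0:ℝ), ∃ q > p, ∃ t₀ > (0:ℝ),
      (∀ t : ℝ, |t| ≤ t₀ → |f t| ≤ A * |t| ^ (q - 1)) ∧
      (∀ t : ℝ, t₀ ≤ |t| → |f t| ≤ A * |t| ^ ((N : ℝ) * p / ((N : ℝ) - p) - 1)))
    (u u' : ℝ → ℝ)
    (hu_pos : ∀ r : ℝ, 0 < r → 0 < u r)
    (hu' : ∀ r : ℝ, 0 < r → HasDerivAt u (u' r) r)
    (hS : ∀ r : ℝ, 0 < r →
      HasDerivAt (fun s : ℝ => s ^ ((N : ℝ) - 1) * |u' s| ^ (p - 2) * u' s)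
        (-(r ^ ((N : ℝ) - 1) *
          (μ / r ^ p * u r ^ (p - 1) - m * u r ^ (p - 1) + f (u r)))) r)
    (hW2 : Tendsto (fun r : ℝ => u r * r ^ (((N : ℝ) - p) / p)) (𝓝[>] 0) (𝓝 0))
    (γ₁ : ℝ)
    (hγ₁ : 0 ≤ γ₁ ∧ γ₁ < ((N : ℝ) - p) / p ∧
      γ₁ ^ (p - 1) * ((p - 1) * γ₁ - ((N : ℝ) - p)) + μ = 0)
    (w : ℝ → ℝ)
    (hw : ∀ r : ℝ, 0 < r →
      w r = -(r ^ (p - 1) * |u' r| ^ (p - 2) * u' r) / u r ^ (p - 1)) :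
    Tendsto w (𝓝[>] 0) (𝓝 (γ₁ ^ (p - 1))) := by
  obtain ⟨A, hA, q, hq, t₀, ht₀, hF₀, hF₁⟩ := hF
  obtain ⟨hγ0, hγlt, hγ⟩ := hγ₁
  obtain ⟨B, hwsB, hB⟩ := exists_gt_riccatiPhi_neg hp1 hpN hμ
  have hw₁B : γ₁ ^ (p - 1) < B := (rpow_lt_rpow hγ0 hγlt (by linarith)).trans hwsB
  have hw₁ : riccatiPhi p N μ (γ₁ ^ (p - 1)) = 0 := by rw [riccatiPhi_rpow_sub_one hp1 hγ0, hγ]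
  have hv : ∀ s, HasDerivAt (fun s => w (exp (-s))) _ s := fun s =>
    (hasDerivAt_comp_exp_neg (fun r hr => hasDerivAt_riccati hp1 hu_pos hu' hS hw hr) s).congr_deriv
      (neg_sub _ _)
  have hℓ := (tendsto_rpow_mul_sub_div_rpow (m := m) hp1 hpN hA.le hq.le ht₀.le hF₀ hF₁ hu_pos
    hW2).comp (tendsto_exp_atBot_nhdsGT.comp tendsto_neg_atTop_atBot)
  have hlim := tendsto_of_riccati (convexOn_riccatiPhi hp1) hw₁ hB hw₁B hv hℓ
    (not_exists_forall_le_riccati hp1 hpN hu_pos hu' hw hW2 hwsB) (by linarith : (0 : ℝ) < p - 1)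
    (one_lt_div_sub_one hp1) fun x hx => mul_abs_rpow_le_riccatiPhi hpN.le hμ0 hx
  refine (hlim.comp (tendsto_neg_atBot_atTop.comp tendsto_log_nhdsGT_zero)).congr' ?_
  filter_upwards [self_mem_nhdsWithin] with r (hr : 0 < r)
  simp [exp_log hr]

theorem stmt_4
    (N : ℕ) (hN : 2 ≤ N) (p μ m : ℝ)
    (hp1 : 1 < p) (hpN : p < N)
    (hμ0 : 0 ≤ μ) (hμ : μ < (((N : ℝ) - p) / p) ^ p)
    (hm : 0 < m)
    (f : ℝ → ℝ) (hf : Continuous f)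
    (hF : ∃ A > (0:ℝ), ∃ q > p, ∃ t₀ > (0:ℝ),
      (∀ t : ℝ, |t| ≤ t₀ → |f t| ≤ A * |t| ^ (q - 1)) ∧
      (∀ t : ℝ, t₀ ≤ |t| → |f t| ≤ A * |t| ^ ((N : ℝ) * p / ((N : ℝ) - p) - 1)))
    (u u' : ℝ → ℝ)
    (hu_pos : ∀ r : ℝ, 0 < r → 0 < u r)
    (hu' : ∀ r : ℝ, 0 < r → HasDerivAt u (u' r) r)
    (hS : ∀ r : ℝ, 0 < r →
      HasDerivAt (fun s : ℝ => s ^ ((N : ℝ) - 1) * |u' s| ^ (p - 2) * u' s)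
        (-(r ^ ((N : ℝ) - 1) *
          (μ / r ^ p * u r ^ (p - 1) - m * u r ^ (p - 1) + f (u r)))) r)
    (hW1 : IntegrableOn
      (fun r : ℝ => (u r ^ p + |u' r| ^ p) * r ^ ((N : ℝ) - 1)) (Ioo 0 1))
    (hW2 : Tendsto (fun r : ℝ => u r * r ^ (((N : ℝ) - p) / p)) (𝓝[>] 0) (𝓝 0))
    (γ₁ : ℝ)
    (hγ₁ : 0 ≤ γ₁ ∧ γ₁ < ((N : ℝ) - p) / p ∧
      γ₁ ^ (p - 1) * ((p - 1) * γ₁ - ((N : ℝ) - p)) + μ = 0)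
    (w : ℝ → ℝ)
    (hw : ∀ r : ℝ, 0 < r →
      w r = -(r ^ (p - 1) * |u' r| ^ (p - 2) * u' r) / u r ^ (p - 1)) :
    Tendsto w (𝓝[>] 0) (𝓝 (γ₁ ^ (p - 1))) :=
  stmt_4_general N p μ m hp1 hpN hμ0 hμ f hF u u' hu_pos hu' hS hW2 γ₁ hγ₁ w hw
end

section
/- Let r₀ > 0, let a < 0, let δ₀ ∈ (0,1) and let C₀ > 0. Let A, B : (0,r₀) → ℝ be continuous with A(r) → a as r → 0+ and |B(r)| ≤ C₀·r^{δ₀−1} for all 0 < r < r₀. Let w : (0,r₀) → ℝ be differentiable with w'(r) = A(r)·w(r)/r + B(r) for all 0 < r < r₀, and suppose w(r) → 0 as r → 0+. Then there exist constants δ > 0, C > 0 and 0 < r₁ ≤ r₀ such that |w(r)| ≤ C·r^{δ} for all 0 < r < r₁. -/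
/-!
Since `A < -ε` near `0`, the damping term `A w / r` dominates the forcing `|B| ≤ C₀ r ^ (δ₀ - 1)`
against the barriers `± C r ^ δ₀` as soon as `C ε ≥ C₀`: wherever `w - C r ^ δ₀` is positive it is
strictly decreasing. A function that tends to `0` at `0⁺` and decreases wherever it is positive
can never become positive, so `|w| ≤ C r ^ δ₀`.
-/

open Filter Topology Set

theorem le_zero_of_tendsto_nhdsGT_of_hasDerivAt_neg {u u' : ℝ → ℝ} {a b : ℝ}
    (hu : ∀ x ∈ Ioo a b, HasDerivAt u (u' x) x) (hneg : ∀ x ∈ Ioo a b, 0 < u x → u' x < 0)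
    (hu0 : Tendsto u (𝓝[>] a) (𝓝 0)) : ∀ r ∈ Ioo a b, u r ≤ 0 := by
  intro r hr
  by_contra! hur
  obtain ⟨s, hus, hs⟩ : ∃ s, u s ≤ u r / 2 ∧ s ∈ Ioo a r :=
    ((hu0.eventually_le_const (half_pos hur)).and (Ioo_mem_nhdsGT hr.1)).exists
  have hsub : Icc s r ⊆ Ioo a b := Icc_subset_Ioo hs.1 hr.2
  -- fence `u` below the level `u r / 2` on `[s, r]`: it can only reach that level while decreasing
  have hfence := image_le_of_deriv_right_lt_deriv_boundary (a := s) (b := r) (f := u)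
    (fun x hx => (hu x (hsub hx)).continuousAt.continuousWithinAt)
    (fun x hx => (hu x (hsub (Ico_subset_Icc_self hx))).hasDerivWithinAt) hus
    (fun _ => hasDerivAt_const _ (u r / 2))
    (fun x hx hx' => hneg x (hsub (Ico_subset_Icc_self hx)) (hx' ▸ half_pos hur))
    ⟨hs.2.le, le_rfl⟩
  linarith

theorem le_mul_rpow_of_hasDerivAt_of_le_neg {A B w : ℝ → ℝ} {r₁ ε δ C C₀ : ℝ}
    (hε : 0 < ε) (hδ : 0 < δ) (hC : 0 ≤ C) (hCε : C₀ ≤ C * ε)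
    (hA : ∀ r ∈ Ioo 0 r₁, A r ≤ -ε) (hB : ∀ r ∈ Ioo 0 r₁, B r ≤ C₀ * r ^ (δ - 1))
    (hw : ∀ r ∈ Ioo 0 r₁, HasDerivAt w (A r * w r / r + B r) r)
    (hw0 : Tendsto w (𝓝[>] 0) (𝓝 0)) :
    ∀ r ∈ Ioo 0 r₁, w r ≤ C * r ^ δ := by
  have hpow0 : Tendsto (fun r : ℝ => C * r ^ δ) (𝓝[>] 0) (𝓝 0) := by
    simpa [Real.zero_rpow hδ.ne'] using
      ((Real.continuousAt_rpow_const 0 δ (Or.inr hδ.le)).tendsto.const_mul C).mono_left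
        nhdsWithin_le_nhds
  intro r hr
  refine sub_nonpos.mp (le_zero_of_tendsto_nhdsGT_of_hasDerivAt_neg (u := fun x => w x - C * x ^ δ)
    (u' := fun x => A x * w x / x + B x - C * (δ * x ^ (δ - 1)))
    (fun x hx => (hw x hx).sub ((Real.hasDerivAt_rpow_const (Or.inl hx.1.ne')).const_mul C))
    (fun x hx hux => ?_) (by simpa using hw0.sub hpow0) r hr)
  have hwx : C * x ^ δ < w x := sub_pos.mp hux
  have hpow : x ^ δ = x ^ (δ - 1) * x := by
    rw [Real.rpow_sub hx.1, Real.rpow_one, div_mul_cancel₀ _ hx.1.ne']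
  have hpos : 0 < x ^ (δ - 1) := Real.rpow_pos_of_pos hx.1 _
  have hw_nonneg : 0 ≤ w x := (mul_nonneg hC (Real.rpow_nonneg hx.1.le δ)).trans hwx.le
  have hdrift : A x * w x / x < -(C * ε) * x ^ (δ - 1) := by
    rw [div_lt_iff₀ hx.1, mul_assoc, ← hpow]
    nlinarith [mul_le_mul_of_nonneg_right (hA x hx) hw_nonneg]
  nlinarith [hB x hx, mul_le_mul_of_nonneg_right hCε hpos.le, mul_nonneg (mul_pos hδ hpos).le hC]

theorem abs_le_mul_rpow_of_hasDerivAt_of_le_neg {A B w : ℝ → ℝ} {r₁ ε δ C C₀ : ℝ}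
    (hε : 0 < ε) (hδ : 0 < δ) (hC : 0 ≤ C) (hCε : C₀ ≤ C * ε)
    (hA : ∀ r ∈ Ioo 0 r₁, A r ≤ -ε) (hB : ∀ r ∈ Ioo 0 r₁, |B r| ≤ C₀ * r ^ (δ - 1))
    (hw : ∀ r ∈ Ioo 0 r₁, HasDerivAt w (A r * w r / r + B r) r)
    (hw0 : Tendsto w (𝓝[>] 0) (𝓝 0)) :
    ∀ r ∈ Ioo 0 r₁, |w r| ≤ C * r ^ δ := by
  intro r hr
  refine abs_le'.mpr ⟨le_mul_rpow_of_hasDerivAt_of_le_neg hε hδ hC hCε hA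
    (fun x hx => (le_abs_self _).trans (hB x hx)) hw hw0 r hr, ?_⟩
  exact le_mul_rpow_of_hasDerivAt_of_le_neg (B := fun x => -B x) (w := fun x => -w x)
    hε hδ hC hCε hA
    (fun x hx => (neg_le_abs _).trans (hB x hx))
    (fun x hx => (hw x hx).neg.congr_deriv (by ring))
    (by simpa only [neg_zero] using hw0.neg) r hr

theorem stmt_6_general
    (r₀ a δ₀ C₀ : ℝ) (hr₀ : 0 < r₀) (ha : a < 0)
    (hδ₀ : 0 < δ₀ ∧ δ₀ < 1) (hC₀ : 0 < C₀)
    (A B w : ℝ → ℝ)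
    (hAa : Tendsto A (𝓝[>] 0) (𝓝 a))
    (hBbound : ∀ r : ℝ, 0 < r → r < r₀ → |B r| ≤ C₀ * r ^ (δ₀ - 1))
    (hw : ∀ r : ℝ, 0 < r → r < r₀ → HasDerivAt w (A r * w r / r + B r) r)
    (hw0 : Tendsto w (𝓝[>] 0) (𝓝 0)) :
    ∃ δ : ℝ, 0 < δ ∧ ∃ C : ℝ, 0 < C ∧ ∃ r₁ : ℝ, 0 < r₁ ∧ r₁ ≤ r₀ ∧
      ∀ r : ℝ, 0 < r → r < r₁ → |w r| ≤ C * r ^ δ := by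
  obtain ⟨ε, hε, haε⟩ : ∃ ε, 0 < ε ∧ a < -ε := ⟨-a / 2, by linarith, by linarith⟩
  obtain ⟨r', hr', hAε⟩ := mem_nhdsGT_iff_exists_Ioo_subset.mp (hAa.eventually_lt_const haε)
  have hsub : Ioo 0 (min r' r₀) ⊆ Ioo 0 r₀ := Ioo_subset_Ioo_right (min_le_right _ _)
  refine ⟨δ₀, hδ₀.1, C₀ / ε, div_pos hC₀ hε, min r' r₀, lt_min hr' hr₀, min_le_right _ _,
    fun r hr hr₁ => ?_⟩
  exact abs_le_mul_rpow_of_hasDerivAt_of_le_neg hε hδ₀.1 (div_pos hC₀ hε).le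
    (div_mul_cancel₀ _ hε.ne').ge
    (fun x hx => (hAε (Ioo_subset_Ioo_right (min_le_left _ _) hx)).le)
    (fun x hx => hBbound x (hsub hx).1 (hsub hx).2)
    (fun x hx => hw x (hsub hx).1 (hsub hx).2) hw0 r ⟨hr, hr₁⟩

theorem stmt_6
    (r₀ a δ₀ C₀ : ℝ) (hr₀ : 0 < r₀) (ha : a < 0)
    (hδ₀ : 0 < δ₀ ∧ δ₀ < 1) (hC₀ : 0 < C₀)
    (A B w : ℝ → ℝ)
    (hA : ContinuousOn A (Ioo 0 r₀))
    (hB : ContinuousOn B (Ioo 0 r₀))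
    (hAa : Tendsto A (𝓝[>] 0) (𝓝 a))
    (hBbound : ∀ r : ℝ, 0 < r → r < r₀ → |B r| ≤ C₀ * r ^ (δ₀ - 1))
    (hw : ∀ r : ℝ, 0 < r → r < r₀ → HasDerivAt w (A r * w r / r + B r) r)
    (hw0 : Tendsto w (𝓝[>] 0) (𝓝 0)) :
    ∃ δ : ℝ, 0 < δ ∧ ∃ C : ℝ, 0 < C ∧ ∃ r₁ : ℝ, 0 < r₁ ∧ r₁ ≤ r₀ ∧
      ∀ r : ℝ, 0 < r → r < r₁ → |w r| ≤ C * r ^ δ :=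
  stmt_6_general r₀ a δ₀ C₀ hr₀ ha hδ₀ hC₀ A B w hAa hBbound hw hw0
end

section
/- Let N ≥ 2 be an integer and let p, μ be real numbers with 1 < p < N and 0 ≤ μ < μ̄ := ((N−p)/p)^p. Let r₀ > 0, let w : (0,r₀) → ℝ be positive and continuously differentiable, and let g : (0,r₀) → ℝ be continuous with g(r) → 0 as r → 0+. Suppose that r·w'(r) = Γ_μ(w(r)^{1/(p−1)}) + g(r) for all 0 < r < r₀. Then the limit L = lim_{r→0+} w(r) exists, is finite, and satisfies L = γ₁^{p−1} or L = γ₂^{p−1}, where γ₁ and γ₂ are the two nonnegative zeros of Γ_μ. -/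
open Filter Topology Set

/-!
Write `F y = Γ_μ (y ^ (1 / (p - 1)))`, so that `r w' = F (w) + g` with `g → 0`. Where `w` meets
a level `x` with `F x ≠ 0` (close to `0`), `w'` has the sign of `F x`, so `w` crosses that level in
one direction only and eventually stays on one side of it. As `F` has only the two nonnegative
zeros `γ₁ ^ (p - 1)` and `γ₂ ^ (p - 1)`, a bounded `w` must converge. It is bounded above:
`F ≥ F c > 0` beyond some `c`, and `w > c` near `0` would give `r w' ≥ F c / 2`, i.e.
`w r ≲ (F c / 2) log r → -∞`. The same logarithmic bound shows that the limit `F L` of `r w'`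
must vanish.
-/

lemma tendsto_atBot_of_const_le_mul_deriv {v v' : ℝ → ℝ} {δ : ℝ} (hδ : 0 < δ)
    (hv : ∀ᶠ r in 𝓝[>] 0, HasDerivAt v (v' r) r)
    (hlb : ∀ᶠ r in 𝓝[>] 0, δ ≤ r * v' r) :
    Tendsto v (𝓝[>] 0) atBot := by
  obtain ⟨ε, hε, hsub⟩ := mem_nhdsGT_iff_exists_Ioo_subset.1 (hv.and hlb)
  -- `r ↦ v r - δ log r` has derivative `v' r - δ / r ≥ 0`
  have hmono : MonotoneOn (fun r => v r - δ * Real.log r) (Ioo 0 ε) := by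
    have hder : ∀ r ∈ Ioo 0 ε, HasDerivAt (fun r => v r - δ * Real.log r) (v' r - δ * r⁻¹) r :=
      fun r hr => (hsub hr).1.sub ((Real.hasDerivAt_log hr.1.ne').const_mul δ)
    refine monotoneOn_of_hasDerivWithinAt_nonneg (convex_Ioo 0 ε)
      (fun r hr => (hder r hr).continuousAt.continuousWithinAt)
      (fun r hr => (hder r (interior_subset hr)).hasDerivWithinAt) fun r hr => ?_
    rw [interior_Ioo] at hr
    have := (hsub hr).2
    rw [sub_nonneg, ← div_eq_mul_inv, div_le_iff₀ hr.1]
    linarith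
  set s := ε / 2
  have hs : s ∈ Ioo 0 ε := ⟨half_pos hε, half_lt_self hε⟩
  refine tendsto_atBot_mono' _ ?_ (tendsto_atBot_add_const_left _ (v s - δ * Real.log s)
    (Real.tendsto_log_nhdsGT_zero.const_mul_atBot hδ))
  filter_upwards [Ioo_mem_nhdsGT hs.1] with r hr
  have := hmono ⟨hr.1, hr.2.trans hs.2⟩ hs hr.2.le
  simp only at this
  linarith

lemma eq_zero_of_tendsto_mul_deriv {w w' : ℝ → ℝ} {L c : ℝ}
    (hw : ∀ᶠ r in 𝓝[>] 0, HasDerivAt w (w' r) r) (hL : Tendsto w (𝓝[>] 0) (𝓝 L))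
    (hc : Tendsto (fun r => r * w' r) (𝓝[>] 0) (𝓝 c)) : c = 0 := by
  rcases lt_trichotomy c 0 with hneg | hzero | hpos
  · have hbot : Tendsto (fun r => -w r) (𝓝[>] 0) atBot :=
      tendsto_atBot_of_const_le_mul_deriv (v' := fun r => -w' r) (δ := -c / 2) (by linarith)
        (hw.mono fun r h => h.neg)
        ((hc.eventually (eventually_le_nhds (by linarith : c < c / 2))).mono
          fun r h => by simp only [mul_neg]; linarith)
    exact absurd hL.neg (not_tendsto_nhds_of_tendsto_atBot hbot _)
  · exact hzero
  · exact absurd hL (not_tendsto_nhds_of_tendsto_atBot (tendsto_atBot_of_const_le_mul_deriv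
      (half_pos hpos) hw (hc.eventually (eventually_ge_nhds (half_lt_self hpos)))) _)

lemma le_of_hasDerivAt_pos_at_level {w w' : ℝ → ℝ} {a b x : ℝ}
    (hw : ∀ r ∈ Icc a b, HasDerivAt w (w' r) r) (hcross : ∀ r ∈ Icc a b, w r = x → 0 < w' r)
    (hb : w b ≤ x) : ∀ r ∈ Icc a b, w r ≤ x := by
  -- comparison principle for `t ↦ w (-t)` against the constant `x`, on `[-b, -a]`
  have hder : ∀ t ∈ Icc (-b) (-a), HasDerivAt (fun t => w (-t)) (-w' (-t)) t := fun t ht => by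
    simpa [Function.comp_def] using
      (hw (-t) ⟨le_neg.1 ht.2, neg_le.1 ht.1⟩).comp t (hasDerivAt_neg t)
  intro r hr
  simpa using image_le_of_deriv_right_lt_deriv_boundary' (f := fun t => w (-t))
    (fun t ht => (hder t ht).continuousAt.continuousWithinAt)
    (fun t ht => (hder t (Ico_subset_Icc_self ht)).hasDerivWithinAt) (B := fun _ => x) (B' := 0)
    (by simpa using hb) continuousOn_const (fun _ _ => hasDerivWithinAt_const _ _ _)
    (fun t ht h => neg_neg_of_pos (hcross (-t) ⟨le_neg.1 ht.2.le, neg_le.1 ht.1⟩ h))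
    ⟨neg_le_neg hr.2, neg_le_neg hr.1⟩

lemma eventually_le_or_ge_of_hasDerivAt_pos_at_level {w w' : ℝ → ℝ} {a x : ℝ}
    (hw : ∀ᶠ r in 𝓝[>] a, HasDerivAt w (w' r) r)
    (hcross : ∀ᶠ r in 𝓝[>] a, w r = x → 0 < w' r) :
    (∀ᶠ r in 𝓝[>] a, w r ≤ x) ∨ ∀ᶠ r in 𝓝[>] a, x ≤ w r := by
  obtain ⟨ε, hε, hsub⟩ := mem_nhdsGT_iff_exists_Ioo_subset.1 (hw.and hcross)
  by_cases hbelow : ∃ s ∈ Ioo a ε, w s ≤ x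
  · obtain ⟨s, hs, hws⟩ := hbelow
    left
    filter_upwards [Ioo_mem_nhdsGT hs.1] with r hr
    have hrs : Icc r s ⊆ Ioo a ε := Icc_subset_Ioo hr.1 hs.2
    exact le_of_hasDerivAt_pos_at_level (fun t ht => (hsub (hrs ht)).1)
      (fun t ht => (hsub (hrs ht)).2) hws r ⟨le_rfl, hr.2.le⟩
  · simp only [not_exists, not_and, not_le] at hbelow
    right
    filter_upwards [Ioo_mem_nhdsGT hε] with r hr using (hbelow r hr).le

lemma exists_tendsto_of_eventually_le_or_ge {α : Type*} {l : Filter α} [l.NeBot] {f : α → ℝ}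
    {S : Set ℝ} (hS : S.Countable) {a b : ℝ} (ha : ∀ᶠ y in l, a ≤ f y) (hb : ∀ᶠ y in l, f y ≤ b)
    (h : ∀ x ∉ S, (∀ᶠ y in l, f y ≤ x) ∨ ∀ᶠ y in l, x ≤ f y) :
    ∃ L, Tendsto f l (𝓝 L) := by
  have hbdd : IsBoundedUnder (· ≤ ·) l f := ⟨b, hb⟩
  have hbdd' : IsBoundedUnder (· ≥ ·) l f := ⟨a, ha⟩
  refine ⟨limsup f l, tendsto_of_liminf_eq_limsup ?_ rfl hbdd hbdd'⟩
  refine (liminf_le_limsup hbdd hbdd').antisymm (not_lt.1 fun hlt => ?_)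
  obtain ⟨x, hxS, hx⟩ := (hS.dense_compl ℝ).exists_between hlt
  rcases h x hxS with hle | hge
  · exact (limsup_le_of_le hbdd'.isCoboundedUnder_le hle).not_gt hx.2
  · exact (le_liminf_of_le hbdd.isCoboundedUnder_ge hge).not_gt hx.1

section RiccatiODE

variable {F w w' g : ℝ → ℝ}
  (hw : ∀ᶠ r in 𝓝[>] 0, HasDerivAt w (w' r) r)
  (hode : ∀ᶠ r in 𝓝[>] 0, r * w' r = F (w r) + g r)
  (hg : Tendsto g (𝓝[>] 0) (𝓝 0))
include hw hode hg

lemma eventually_le_or_ge_of_ode {x : ℝ} (hx : F x ≠ 0) :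
    (∀ᶠ r in 𝓝[>] 0, w r ≤ x) ∨ ∀ᶠ r in 𝓝[>] 0, x ≤ w r := by
  have hsmall : ∀ᶠ r in 𝓝[>] 0, |g r| < |F x| :=
    hg.norm.eventually (gt_mem_nhds (by simpa using hx))
  -- at a time `r` with `w r = x`, the sign of `r * w' r = F x + g r` is that of `F x`
  rcases hx.lt_or_gt with hneg | hpos
  · have key := eventually_le_or_ge_of_hasDerivAt_pos_at_level (w := fun r => -w r)
      (w' := fun r => -w' r) (x := -x) (hw.mono fun r h => h.neg) <| by
      filter_upwards [hode, hsmall, self_mem_nhdsWithin] with r hr hgr (hr0 : 0 < r) hwx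
      rw [abs_of_neg hneg] at hgr
      rw [neg_inj.1 hwx] at hr
      exact neg_pos.2 (neg_of_mul_neg_right (by linarith [le_abs_self (g r)]) hr0.le)
    simp only [neg_le_neg_iff] at key
    exact key.symm
  · refine eventually_le_or_ge_of_hasDerivAt_pos_at_level hw ?_
    filter_upwards [hode, hsmall, self_mem_nhdsWithin] with r hr hgr (hr0 : 0 < r) hwx
    rw [abs_of_pos hpos] at hgr
    rw [hwx] at hr
    exact pos_of_mul_pos_right (by linarith [neg_abs_le (g r)]) hr0.le

lemma eventually_le_of_ode {c : ℝ} (hpos : ∀ᶠ r in 𝓝[>] 0, 0 ≤ w r) (hc : 0 < F c)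
    (hmono : MonotoneOn F (Ici c)) : ∀ᶠ r in 𝓝[>] 0, w r ≤ c := by
  refine (eventually_le_or_ge_of_ode hw hode hg hc.ne').resolve_right fun hge => ?_
  -- above `c` the equation forces `r * w' r ≥ F c / 2`, driving `w` to `-∞`
  have hbot := tendsto_atBot_of_const_le_mul_deriv (half_pos hc) hw <| by
    filter_upwards [hode, hge, hg.eventually (lt_mem_nhds (neg_lt_zero.2 (half_pos hc)))]
      with r hr hwr hgr
    rw [hr]
    linarith [hmono self_mem_Ici hwr hwr]
  obtain ⟨r, hr, hr'⟩ := ((hbot.eventually (eventually_lt_atBot 0)).and hpos).exists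
  exact hr'.not_gt hr

theorem exists_tendsto_of_ode (hF : Continuous F) (hpos : ∀ᶠ r in 𝓝[>] 0, 0 ≤ w r)
    (hzeros : {x | 0 ≤ x ∧ F x = 0}.Countable) {c : ℝ} (hc : 0 < F c)
    (hmono : MonotoneOn F (Ici c)) :
    ∃ L, Tendsto w (𝓝[>] 0) (𝓝 L) ∧ 0 ≤ L ∧ F L = 0 := by
  obtain ⟨L, hL⟩ := exists_tendsto_of_eventually_le_or_ge hzeros hpos
    (eventually_le_of_ode hw hode hg hpos hc hmono) fun x hx => by
      rcases lt_or_ge x 0 with hx0 | hx0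
      · exact Or.inr (hpos.mono fun r h => hx0.le.trans h)
      · exact eventually_le_or_ge_of_ode hw hode hg fun h => hx ⟨hx0, h⟩
  refine ⟨L, hL, ge_of_tendsto hL hpos, eq_zero_of_tendsto_mul_deriv hw hL ?_⟩
  simpa using ((hF.tendsto L).comp hL).add hg |>.congr' (hode.mono fun r h => h.symm)

end RiccatiODE

/-- `Γ_μ` of the paper, with `A = N - p`. -/
noncomputable def riccatiGamma (p A μ γ : ℝ) : ℝ := γ ^ (p - 1) * ((p - 1) * γ - A) + μ

section RiccatiGamma

variable {p A μ : ℝ}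

lemma continuous_riccatiGamma (hp : 1 ≤ p) : Continuous (riccatiGamma p A μ) :=
  ((Real.continuous_rpow_const (sub_nonneg.2 hp)).mul
    ((continuous_const.mul continuous_id).sub continuous_const)).add continuous_const

lemma hasDerivAt_riccatiGamma {γ : ℝ} (hγ : 0 < γ) :
    HasDerivAt (riccatiGamma p A μ) ((p - 1) * γ ^ (p - 2) * (p * γ - A)) γ := by
  refine (((Real.hasDerivAt_rpow_const (p := p - 1) (Or.inl hγ.ne')).mul
    (((hasDerivAt_id γ).const_mul (p - 1)).sub_const A)).add_const μ).congr_deriv ?_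
  rw [show p - 1 - 1 = p - 2 by ring, show p - 1 = p - 2 + 1 by ring, Real.rpow_add_one hγ.ne']
  simp only [id]
  ring

lemma strictAntiOn_riccatiGamma (hp : 1 < p) :
    StrictAntiOn (riccatiGamma p A μ) (Icc 0 (A / p)) := by
  refine strictAntiOn_of_deriv_neg (convex_Icc 0 _) (continuous_riccatiGamma hp.le).continuousOn
    fun γ hγ => ?_
  rw [interior_Icc] at hγ
  rw [(hasDerivAt_riccatiGamma hγ.1).deriv]
  have : γ * p < A := (lt_div_iff₀ (by linarith)).1 hγ.2
  exact mul_neg_of_pos_of_neg (mul_pos (by linarith) (Real.rpow_pos_of_pos hγ.1 _)) (by linarith)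

lemma strictMonoOn_riccatiGamma (hp : 1 < p) (hA : 0 ≤ A) :
    StrictMonoOn (riccatiGamma p A μ) (Ici (A / p)) := by
  refine strictMonoOn_of_deriv_pos (convex_Ici _) (continuous_riccatiGamma hp.le).continuousOn
    fun γ hγ => ?_
  rw [interior_Ici] at hγ
  have hγ0 : 0 < γ := lt_of_le_of_lt (by positivity) hγ
  rw [(hasDerivAt_riccatiGamma hγ0).deriv]
  have : A < γ * p := (div_lt_iff₀ (by linarith)).1 hγ
  exact mul_pos (mul_pos (by linarith) (Real.rpow_pos_of_pos hγ0 _)) (by linarith)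

lemma monotoneOn_riccatiGamma_rpow (hp : 1 < p) (hA : 0 ≤ A) {γ : ℝ} (hγ : A / p ≤ γ) :
    MonotoneOn (fun y => riccatiGamma p A μ (y ^ ((1 : ℝ) / (p - 1)))) (Ici (γ ^ (p - 1))) := by
  have hq : 0 < p - 1 := sub_pos.2 hp
  have hγ0 : 0 ≤ γ := (div_nonneg hA (by linarith)).trans hγ
  have hnonneg : ∀ y ∈ Ici (γ ^ (p - 1)), 0 ≤ y := fun y hy => (Real.rpow_nonneg hγ0 _).trans hy
  refine (strictMonoOn_riccatiGamma hp hA).monotoneOn.comp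
    (fun y hy z _ hyz => Real.rpow_le_rpow (hnonneg y hy) hyz (by positivity)) fun y hy => ?_
  rw [one_div]
  exact hγ.trans ((Real.le_rpow_inv_iff_of_pos hγ0 (hnonneg y hy) hq).2 hy)

lemma riccatiGamma_rpow_pos (hp : 1 < p) (hA : 0 ≤ A) {γ : ℝ} (hγ : A / p ≤ γ)
    (hΓ : riccatiGamma p A μ γ = 0) {y : ℝ} (hy : γ ^ (p - 1) < y) :
    0 < riccatiGamma p A μ (y ^ ((1 : ℝ) / (p - 1))) := by
  have hγ0 : 0 ≤ γ := (div_nonneg hA (by linarith)).trans hγ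
  have hy0 : 0 ≤ y := (Real.rpow_nonneg hγ0 _).trans hy.le
  have hlt : γ < y ^ ((1 : ℝ) / (p - 1)) := by
    rw [one_div]
    exact (Real.lt_rpow_inv_iff_of_pos hγ0 hy0 (sub_pos.2 hp)).2 hy
  exact hΓ ▸ strictMonoOn_riccatiGamma hp hA hγ (hγ.trans hlt.le) hlt

variable {γ₁ γ₂ : ℝ} (hp : 1 < p) (hA : 0 ≤ A)
  (hγ₁ : 0 ≤ γ₁) (hγ₁A : γ₁ ≤ A / p) (hΓ₁ : riccatiGamma p A μ γ₁ = 0)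
  (hγ₂A : A / p ≤ γ₂) (hΓ₂ : riccatiGamma p A μ γ₂ = 0)
include hp hA hγ₁ hγ₁A hΓ₁ hγ₂A hΓ₂

lemma eq_or_eq_of_riccatiGamma_eq_zero {γ : ℝ} (hγ : 0 ≤ γ) (h : riccatiGamma p A μ γ = 0) :
    γ = γ₁ ∨ γ = γ₂ := by
  rcases le_total γ (A / p) with hle | hge
  · exact Or.inl <| (strictAntiOn_riccatiGamma hp).injOn ⟨hγ, hle⟩ ⟨hγ₁, hγ₁A⟩ (h.trans hΓ₁.symm)
  · exact Or.inr <| (strictMonoOn_riccatiGamma hp hA).injOn hge hγ₂A (h.trans hΓ₂.symm)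

lemma eq_or_eq_of_riccatiGamma_rpow_eq_zero {y : ℝ} (hy : 0 ≤ y)
    (h : riccatiGamma p A μ (y ^ ((1 : ℝ) / (p - 1))) = 0) :
    y = γ₁ ^ (p - 1) ∨ y = γ₂ ^ (p - 1) := by
  have hq : p - 1 ≠ 0 := (sub_pos.2 hp).ne'
  rcases eq_or_eq_of_riccatiGamma_eq_zero hp hA hγ₁ hγ₁A hΓ₁ hγ₂A hΓ₂ (Real.rpow_nonneg hy _) h
    with h | h
  · exact Or.inl (by rw [← h, one_div, Real.rpow_inv_rpow hy hq])
  · exact Or.inr (by rw [← h, one_div, Real.rpow_inv_rpow hy hq])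

end RiccatiGamma

theorem stmt_7_general
    (N : ℕ) (p μ : ℝ)
    (hp1 : 1 < p) (hpN : p < N)
    (γ₁ γ₂ : ℝ)
    (hγ₁ : 0 ≤ γ₁ ∧ γ₁ < ((N : ℝ) - p) / p ∧
      γ₁ ^ (p - 1) * ((p - 1) * γ₁ - ((N : ℝ) - p)) + μ = 0)
    (hγ₂ : ((N : ℝ) - p) / p < γ₂ ∧ γ₂ ≤ ((N : ℝ) - p) / (p - 1) ∧
      γ₂ ^ (p - 1) * ((p - 1) * γ₂ - ((N : ℝ) - p)) + μ = 0)
    (r₀ : ℝ) (hr₀ : 0 < r₀)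
    (w w' g : ℝ → ℝ)
    (hw_pos : ∀ r : ℝ, 0 < r → r < r₀ → 0 < w r)
    (hw' : ∀ r : ℝ, 0 < r → r < r₀ → HasDerivAt w (w' r) r)
    (hg0 : Tendsto g (𝓝[>] 0) (𝓝 0))
    (heq : ∀ r : ℝ, 0 < r → r < r₀ →
      r * w' r =
        (w r ^ ((1 : ℝ) / (p - 1))) ^ (p - 1) *
            ((p - 1) * w r ^ ((1 : ℝ) / (p - 1)) - ((N : ℝ) - p)) + μ + g r) :
    ∃ L : ℝ, Tendsto w (𝓝[>] 0) (𝓝 L) ∧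
      (L = γ₁ ^ (p - 1) ∨ L = γ₂ ^ (p - 1)) := by
  obtain ⟨hγ₁0, hγ₁A, hΓ₁⟩ := hγ₁
  obtain ⟨hγ₂A, -, hΓ₂⟩ := hγ₂
  have hA : 0 ≤ (N : ℝ) - p := sub_nonneg.2 hpN.le
  have hzero (y : ℝ) :=
    eq_or_eq_of_riccatiGamma_rpow_eq_zero (y := y) hp1 hA hγ₁0 hγ₁A.le hΓ₁ hγ₂A.le hΓ₂
  have hnear : Ioo 0 r₀ ∈ 𝓝[>] 0 := Ioo_mem_nhdsGT hr₀
  obtain ⟨L, hL, hL0, hFL⟩ :=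
    exists_tendsto_of_ode (F := fun y => riccatiGamma p (N - p) μ (y ^ ((1 : ℝ) / (p - 1))))
      (mem_of_superset hnear fun r hr => hw' r hr.1 hr.2)
      (mem_of_superset hnear fun r hr => heq r hr.1 hr.2) hg0
      ((continuous_riccatiGamma hp1.le).comp
        (Real.continuous_rpow_const (one_div_nonneg.2 (sub_nonneg.2 hp1.le))))
      (mem_of_superset hnear fun r hr => (hw_pos r hr.1 hr.2).le)
      ((toFinite {γ₁ ^ (p - 1), γ₂ ^ (p - 1)}).countable.mono fun y hy => hzero y hy.1 hy.2)
      (riccatiGamma_rpow_pos hp1 hA hγ₂A.le hΓ₂ (lt_add_one _))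
      ((monotoneOn_riccatiGamma_rpow hp1 hA hγ₂A.le).mono
        (Ici_subset_Ici.2 (le_add_of_nonneg_right zero_le_one)))
  exact ⟨L, hL, hzero L hL0 hFL⟩

theorem stmt_7
    (N : ℕ) (hN : 2 ≤ N) (p μ : ℝ)
    (hp1 : 1 < p) (hpN : p < N)
    (hμ0 : 0 ≤ μ) (hμ : μ < (((N : ℝ) - p) / p) ^ p)
    (γ₁ γ₂ : ℝ)
    (hγ₁ : 0 ≤ γ₁ ∧ γ₁ < ((N : ℝ) - p) / p ∧
      γ₁ ^ (p - 1) * ((p - 1) * γ₁ - ((N : ℝ) - p)) + μ = 0)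
    (hγ₂ : ((N : ℝ) - p) / p < γ₂ ∧ γ₂ ≤ ((N : ℝ) - p) / (p - 1) ∧
      γ₂ ^ (p - 1) * ((p - 1) * γ₂ - ((N : ℝ) - p)) + μ = 0)
    (r₀ : ℝ) (hr₀ : 0 < r₀)
    (w w' g : ℝ → ℝ)
    (hw_pos : ∀ r : ℝ, 0 < r → r < r₀ → 0 < w r)
    (hw' : ∀ r : ℝ, 0 < r → r < r₀ → HasDerivAt w (w' r) r)
    (hw'c : ContinuousOn w' (Ioo 0 r₀))
    (hg : ContinuousOn g (Ioo 0 r₀))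
    (hg0 : Tendsto g (𝓝[>] 0) (𝓝 0))
    (heq : ∀ r : ℝ, 0 < r → r < r₀ →
      r * w' r =
        (w r ^ ((1 : ℝ) / (p - 1))) ^ (p - 1) *
            ((p - 1) * w r ^ ((1 : ℝ) / (p - 1)) - ((N : ℝ) - p)) + μ + g r) :
    ∃ L : ℝ, Tendsto w (𝓝[>] 0) (𝓝 L) ∧
      (L = γ₁ ^ (p - 1) ∨ L = γ₂ ^ (p - 1)) :=
  stmt_7_general N p μ hp1 hpN γ₁ γ₂ hγ₁ hγ₂ r₀ hr₀ w w' g hw_pos hw' hg0 heq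
end

section
/- Let p > 1, K > 0 and r₀ ∈ ℝ. Let φ : (r₀,∞) → ℝ be differentiable with φ(r) ≥ 0 for all r > r₀, and suppose that φ'(r) ≥ ((p−1)/2)·φ(r)^{p/(p−1)} − K for all r > r₀. Then φ(r) ≤ (4K/(p−1))^{(p−1)/p} for all r > r₀. -/
open Filter Topology Set

theorem stmt_8
    (p K r₀ : ℝ) (hp : 1 < p) (hK : 0 < K)
    (φ φ' : ℝ → ℝ)
    (hφd : ∀ r : ℝ, r₀ < r → HasDerivAt φ (φ' r) r)
    (hφ0 : ∀ r : ℝ, r₀ < r → 0 ≤ φ r)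
    (hineq : ∀ r : ℝ, r₀ < r →
      φ' r ≥ ((p - 1) / 2) * φ r ^ (p / (p - 1)) - K) :
    ∀ r : ℝ, r₀ < r → φ r ≤ (4 * K / (p - 1)) ^ ((p - 1) / p) := by
  have hp1 : (0:ℝ) < p - 1 := by linarith
  have hp0 : (0:ℝ) < p := by linarith
  set q := p / (p - 1) with hq_def
  have hq1 : 1 < q := by
    rw [hq_def, lt_div_iff₀ hp1]; linarith
  have hq0 : (0:ℝ) < q := by linarith
  set M := (4 * K / (p - 1)) ^ ((p - 1) / p) with hM_def
  have hbase : (0:ℝ) < 4 * K / (p - 1) := by positivity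
  have hM0 : 0 < M := Real.rpow_pos_of_pos hbase _
  have hMq : M ^ q = 4 * K / (p - 1) := by
    rw [hM_def, ← Real.rpow_mul hbase.le]
    rw [show (p-1)/p * q = 1 by rw [hq_def]; field_simp, Real.rpow_one]
  have hkey : ∀ x : ℝ, M ≤ x → K ≤ ((p - 1) / 2) * x ^ q - K := by
    intro x hx
    have h1 : M ^ q ≤ x ^ q := Real.rpow_le_rpow hM0.le hx hq0.le
    rw [hMq] at h1
    have h2 : ((p-1)/2) * (4 * K / (p-1)) ≤ ((p-1)/2) * x ^ q :=
      mul_le_mul_of_nonneg_left h1 (by positivity)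
    have h3 : ((p-1)/2) * (4 * K / (p-1)) = 2 * K := by
      field_simp; ring
    linarith
  intro r₁ hr₁
  by_contra hgt
  push_neg at hgt
  have haM : M < φ r₁ := hgt
  -- invariance: once above φ r₁, stays above
  have inv : ∀ s, r₁ ≤ s → φ r₁ ≤ φ s := by
    intro s hs
    by_contra hlt
    push_neg at hlt
    set b := max (φ s) M with hb
    have hbM : M ≤ b := le_max_right _ _
    have hba : b < φ r₁ := max_lt hlt haM
    have hcont : ContinuousOn φ (Icc r₁ s) := fun u hu =>
      ((hφd u (lt_of_lt_of_le hr₁ hu.1)).continuousAt).continuousWithinAt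
    set C := Icc r₁ s ∩ φ ⁻¹' (Iic b) with hC
    have hCne : C.Nonempty := ⟨s, ⟨hs, le_rfl⟩, Set.mem_preimage.mpr (mem_Iic.mpr (le_max_left _ _))⟩
    have hCcl : IsClosed C := hcont.preimage_isClosed_of_isClosed isClosed_Icc isClosed_Iic
    have hCbdd : BddBelow C := ⟨r₁, fun u hu => hu.1.1⟩
    set t := sInf C with ht_def
    have htC : t ∈ C := hCcl.csInf_mem hCne hCbdd
    have htIcc : t ∈ Icc r₁ s := htC.1
    have htb : φ t ≤ b := htC.2
    have hrt : r₁ < t := by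
      rcases lt_or_eq_of_le htIcc.1 with h | h
      · exact h
      · exfalso; rw [← h] at htb; linarith
    have hmono : StrictMonoOn φ (Icc r₁ t) := by
      apply strictMonoOn_of_deriv_pos (convex_Icc _ _)
        (hcont.mono (Icc_subset_Icc le_rfl htIcc.2))
      intro x hx
      rw [interior_Icc] at hx
      have hx0 : r₀ < x := lt_trans hr₁ hx.1
      have hxC : x ∉ C := fun hmem => absurd (csInf_le hCbdd hmem) (not_le.mpr hx.2)
      have hxIcc : x ∈ Icc r₁ s := ⟨hx.1.le, hx.2.le.trans htIcc.2⟩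
      have hbx : b < φ x := by
        by_contra h
        exact hxC ⟨hxIcc, not_lt.mp h⟩
      have hk := hkey (φ x) (hbM.trans hbx.le)
      rw [(hφd x hx0).deriv]
      have := hineq x hx0
      linarith
    have := hmono (left_mem_Icc.mpr htIcc.1) (right_mem_Icc.mpr htIcc.1) hrt
    linarith
  -- blow-up argument
  set c := (p - 1) / 4 with hc
  have hc0 : 0 < c := by positivity
  have hφpos : ∀ s, r₁ ≤ s → 0 < φ s := fun s hs =>
    lt_of_lt_of_le (hM0.trans haM) (inv s hs)
  have h2 : ∀ s, r₁ ≤ s → c * φ s ^ q ≤ φ' s := by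
    intro s hs
    have hMs : M ≤ φ s := haM.le.trans (inv s hs)
    have h1 : M ^ q ≤ φ s ^ q := Real.rpow_le_rpow hM0.le hMs hq0.le
    rw [hMq] at h1
    have h3 : K ≤ c * φ s ^ q := by
      have h5 : c * (4*K/(p-1)) ≤ c * φ s ^ q := mul_le_mul_of_nonneg_left h1 hc0.le
      have he : c * (4*K/(p-1)) = K := by rw [hc]; field_simp
      linarith
    have h6 := hineq s (lt_of_lt_of_le hr₁ hs)
    have h4 : ((p-1)/2) * φ s ^ q = c * φ s ^ q + c * φ s ^ q := by rw [hc]; ring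
    linarith
  set d := (q - 1) * c with hd_def
  have hd0 : 0 < d := mul_pos (by linarith) hc0
  set v : ℝ → ℝ := fun r => φ r ^ (1 - q) + d * r with hv_def
  have hv : ∀ s, r₁ ≤ s →
      HasDerivAt v (φ' s * (1 - q) * φ s ^ (1 - q - 1) + d) s := by
    intro s hs
    have h1 : HasDerivAt (fun r => φ r ^ (1 - q)) (φ' s * (1 - q) * φ s ^ (1 - q - 1)) s :=
      (hφd s (lt_of_lt_of_le hr₁ hs)).rpow_const (Or.inl (hφpos s hs).ne')
    have h2 : HasDerivAt (fun r : ℝ => d * r) d s := by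
      simpa using (hasDerivAt_id s).const_mul d
    exact h1.add h2
  have hderiv_le : ∀ s, r₁ ≤ s → φ' s * (1 - q) * φ s ^ (1 - q - 1) + d ≤ 0 := by
    intro s hs
    have hpos := hφpos s hs
    have hqq : φ s ^ q * φ s ^ (-q) = 1 := by
      rw [← Real.rpow_add hpos]
      simp
    have hexp : (1 : ℝ) - q - 1 = -q := by ring
    rw [hexp]
    have hng : φ' s * (1 - q) ≤ c * φ s ^ q * (1 - q) := by
      have := h2 s hs
      nlinarith [this, hq1]
    have hnn : (0:ℝ) ≤ φ s ^ (-q) := (Real.rpow_pos_of_pos hpos _).le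
    have hmul : φ' s * (1 - q) * φ s ^ (-q) ≤ c * φ s ^ q * (1 - q) * φ s ^ (-q) :=
      mul_le_mul_of_nonneg_right hng hnn
    have heq : c * φ s ^ q * (1 - q) * φ s ^ (-q) = -d := by
      rw [hd_def]
      nlinarith [hqq]
    linarith
  have hanti : AntitoneOn v (Ici r₁) := by
    apply antitoneOn_of_deriv_nonpos (convex_Ici r₁)
    · exact fun s hs => (hv s hs).continuousAt.continuousWithinAt
    · rw [interior_Ici]
      exact fun s hs => (hv s (le_of_lt hs)).differentiableAt.differentiableWithinAt
    · rw [interior_Ici]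
      intro s hs
      rw [(hv s (le_of_lt hs)).deriv]
      exact hderiv_le s (le_of_lt hs)
  set u₁ := φ r₁ ^ (1 - q) with hu₁
  have hu₁0 : 0 < u₁ := Real.rpow_pos_of_pos (hφpos r₁ le_rfl) _
  set R := r₁ + u₁ / d + 1 with hR_def
  have hRr : r₁ ≤ R := by
    have : 0 < u₁ / d := div_pos hu₁0 hd0
    rw [hR_def]; linarith
  have hvv : v R ≤ v r₁ := hanti self_mem_Ici hRr hRr
  have hRpos : 0 < φ R ^ (1 - q) := Real.rpow_pos_of_pos (hφpos R hRr) _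
  have hud : d * (u₁ / d) = u₁ := by field_simp
  rw [hv_def] at hvv
  simp only at hvv
  have hdR : d * R = d * r₁ + u₁ + d := by
    rw [hR_def, mul_add, mul_add, hud, mul_one]
  linarith [hvv, hRpos, hd0, hdR]
end

section
/- Let N ≥ 2 be an integer, let p > 1, m > 0 and R > 0. Let φ : (R,∞) → ℝ be positive and continuously differentiable, and let e : (R,∞) → ℝ be continuous with e(r) → −m as r → ∞. Suppose that φ'(r) = (p−1)·φ(r)^{p/(p−1)} − ((N−1)/r)·φ(r) + e(r) for all r > R. Then φ(r) → (m/(p−1))^{(p−1)/p} as r → ∞. -/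
open Filter Topology Set

private lemma mono_aux {f f' : ℝ → ℝ} {a b c : ℝ} (hab : a ≤ b)
    (hd : ∀ x ∈ Icc a b, HasDerivAt f (f' x) x)
    (hc : ∀ x ∈ Icc a b, c ≤ f' x) :
    c * (b - a) ≤ f b - f a := by
  have hgd : ∀ x ∈ Icc a b, HasDerivAt (fun y => f y - c * y) (f' x - c) x := by
    intro x hx
    have h2 : HasDerivAt (fun y : ℝ => c * y) c x := by
      simpa using (hasDerivAt_id x).const_mul c
    exact (hd x hx).sub h2
  have hmono : MonotoneOn (fun y => f y - c * y) (Icc a b) := by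
    apply monotoneOn_of_deriv_nonneg (convex_Icc a b)
    · exact fun x hx => (hgd x hx).continuousAt.continuousWithinAt
    · intro x hx
      rw [interior_Icc] at hx
      exact (hgd x (Ioo_subset_Icc_self hx)).differentiableAt.differentiableWithinAt
    · intro x hx
      rw [interior_Icc] at hx
      rw [(hgd x (Ioo_subset_Icc_self hx)).deriv]
      linarith [hc x (Ioo_subset_Icc_self hx)]
  have h : f a - c * a ≤ f b - c * b :=
    hmono (left_mem_Icc.2 hab) (right_mem_Icc.2 hab) hab
  nlinarith [h]

private lemma persist {f f' : ℝ → ℝ} {a c : ℝ}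
    (hd : ∀ x, a ≤ x → HasDerivAt f (f' x) x)
    (ha : c ≤ f a)
    (hpos : ∀ x, a ≤ x → f x = c → 0 < f' x) :
    ∀ x, a ≤ x → c ≤ f x := by
  intro x₁ hx₁
  by_contra hcon
  push_neg at hcon
  have hax : a < x₁ := by
    rcases eq_or_lt_of_le hx₁ with h | h
    · exfalso; rw [← h] at hcon; linarith
    · exact h
  have hcont : ContinuousOn f (Icc a x₁) := fun x hx => (hd x hx.1).continuousAt.continuousWithinAt
  have hclosed : IsClosed (Icc a x₁ ∩ f ⁻¹' Ici c) :=
    hcont.preimage_isClosed_of_isClosed isClosed_Icc isClosed_Ici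
  have hne : (Icc a x₁ ∩ f ⁻¹' Ici c).Nonempty := ⟨a, left_mem_Icc.2 hx₁, ha⟩
  have hbdd : BddAbove (Icc a x₁ ∩ f ⁻¹' Ici c) := ⟨x₁, fun y hy => hy.1.2⟩
  set t := sSup (Icc a x₁ ∩ f ⁻¹' Ici c) with ht
  have htmem := hclosed.csSup_mem hne hbdd
  obtain ⟨⟨hat, htx⟩, hft⟩ := htmem
  have hft' : c ≤ f t := hft
  have htlt : t < x₁ := lt_of_le_of_ne htx (fun h => by rw [h] at hft'; linarith)
  have hlt : ∀ s, t < s → s ≤ x₁ → f s < c := by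
    intro s hs hsx
    by_contra h
    push_neg at h
    have hmem : s ∈ Icc a x₁ ∩ f ⁻¹' Ici c := ⟨⟨le_trans hat hs.le, hsx⟩, h⟩
    exact absurd (le_csSup hbdd hmem) (not_le.2 hs)
  have hIoc : Ioc t x₁ ∈ 𝓝[>] t := Ioc_mem_nhdsGT_of_mem ⟨le_refl t, htlt⟩
  have hfle : f t ≤ c := by
    have htend : Tendsto f (𝓝[>] t) (𝓝 (f t)) :=
      Filter.Tendsto.mono_left ((hd t hat).continuousAt) nhdsWithin_le_nhds
    refine le_of_tendsto htend ?_
    filter_upwards [hIoc] with s hs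
    exact (hlt s hs.1 hs.2).le
  have hfeq : f t = c := le_antisymm hfle hft'
  have hder : 0 < f' t := hpos t hat hfeq
  have hslope : Tendsto (slope f t) (𝓝[>] t) (𝓝 (f' t)) :=
    (hasDerivAt_iff_tendsto_slope.1 (hd t hat)).mono_left
      (nhdsWithin_mono t (fun s hs => Set.mem_compl_singleton_iff.2 (ne_of_gt hs)))
  have hle0 : f' t ≤ 0 := by
    refine le_of_tendsto hslope ?_
    filter_upwards [hIoc] with s hs
    rw [slope_def_field]
    apply div_nonpos_of_nonpos_of_nonneg
    · have := hlt s hs.1 hs.2; linarith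
    · have := hs.1; linarith
  linarith

set_option maxHeartbeats 1000000 in
theorem stmt_9
    (N : ℕ) (hN : 2 ≤ N) (p m R : ℝ)
    (hp : 1 < p) (hm : 0 < m) (hR : 0 < R)
    (φ φ' e : ℝ → ℝ)
    (hφ_pos : ∀ r : ℝ, R < r → 0 < φ r)
    (hφd : ∀ r : ℝ, R < r → HasDerivAt φ (φ' r) r)
    (hφ'c : ContinuousOn φ' (Ioi R))
    (he : ContinuousOn e (Ioi R))
    (he_lim : Tendsto e atTop (𝓝 (-m)))
    (heq : ∀ r : ℝ, R < r →
      φ' r = (p - 1) * φ r ^ (p / (p - 1)) - (((N : ℝ) - 1) / r) * φ r + e r) :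
    Tendsto φ atTop (𝓝 ((m / (p - 1)) ^ ((p - 1) / p))) := by
  have hp0 : (0:ℝ) < p - 1 := by linarith
  have hpne : p ≠ 0 := by positivity
  have hpne1 : p - 1 ≠ 0 := ne_of_gt hp0
  set q : ℝ := p / (p - 1) with hq
  have hq1 : 1 < q := by
    rw [hq, lt_div_iff₀ hp0]; linarith
  have hq0 : 0 < q := by linarith
  set L : ℝ := (m / (p - 1)) ^ ((p - 1) / p) with hL
  have hmdiv : 0 < m / (p - 1) := div_pos hm hp0
  have hL0 : 0 < L := Real.rpow_pos_of_pos hmdiv _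
  have hexp : ((p - 1) / p) * q = 1 := by rw [hq]; field_simp
  have hLqm : L ^ q = m / (p - 1) := by
    rw [hL, ← Real.rpow_mul hmdiv.le, hexp, Real.rpow_one]
  have hLq : (p - 1) * L ^ q = m := by
    rw [hLqm]; field_simp
  have hN1 : (1:ℝ) ≤ (N:ℝ) - 1 := by
    have h2 : (2:ℝ) ≤ (N:ℝ) := by exact_mod_cast hN
    linarith
  refine tendsto_order.2 ⟨?_, ?_⟩
  · -- lower bound: ∀ l < L, eventually l < φ r
    intro l hl
    set l' : ℝ := max l (L / 2) with hl'
    have hl'0 : 0 < l' := lt_of_lt_of_le (by linarith) (le_max_right _ _)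
    have hl'L : l' < L := max_lt hl (by linarith)
    have hll' : l ≤ l' := le_max_left _ _
    have hc : 0 < m - (p - 1) * l' ^ q := by
      have h := Real.rpow_lt_rpow hl'0.le hl'L hq0
      nlinarith
    set c : ℝ := m - (p - 1) * l' ^ q with hcdef
    obtain ⟨r₁, hr₁⟩ := eventually_atTop.1
      (he_lim.eventually (gt_mem_nhds (show -m < -m + c / 2 by linarith)))
    set a : ℝ := max r₁ (R + 1) with ha
    have haR : R < a := lt_of_lt_of_le (by linarith) (le_max_right _ _)
    have key : ∀ r, a ≤ r → l' < φ r := by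
      intro r₀ hr₀
      by_contra hcon
      push_neg at hcon
      have hR₀ : R < r₀ := lt_of_lt_of_le haR hr₀
      have hae : ∀ x, r₀ ≤ x → e x < -m + c / 2 := fun x hx =>
        hr₁ x (le_trans (le_trans (le_max_left _ _) hr₀) hx)
      -- invariance: φ ≤ l' on [r₀, ∞)
      have hinv : ∀ x, r₀ ≤ x → φ x ≤ l' := by
        have hper := persist (f := fun y => -φ y) (f' := fun y => -φ' y) (a := r₀) (c := -l')
          (fun x hx => (hφd x (lt_of_lt_of_le hR₀ hx)).neg)
          (by simp only [neg_le_neg_iff]; exact hcon)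
          (by
            intro x hx hfx
            have hφx : φ x = l' := neg_injective hfx
            have hxR : R < x := lt_of_lt_of_le hR₀ hx
            have hx0 : 0 < x := lt_trans hR hxR
            have hdrift : 0 ≤ ((N:ℝ) - 1) / x * l' :=
              mul_nonneg (div_nonneg (by linarith) hx0.le) hl'0.le
            have hex := hae x hx
            have heqx := heq x hxR
            rw [hφx] at heqx
            show 0 < -φ' x
            rw [heqx]
            linarith)
        intro x hx
        have h := hper x hx
        simp only [neg_le_neg_iff] at h
        exact h
      -- derivative bound
      have hder : ∀ x, r₀ ≤ x → φ' x ≤ -(c/2) := by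
        intro x hx
        have hxR : R < x := lt_of_lt_of_le hR₀ hx
        have hx0 : 0 < x := lt_trans hR hxR
        have hφx : 0 < φ x := hφ_pos x hxR
        have hφl : φ x ≤ l' := hinv x hx
        have hrq : φ x ^ q ≤ l' ^ q := Real.rpow_le_rpow hφx.le hφl hq0.le
        have hdrift : 0 ≤ ((N:ℝ) - 1) / x * φ x :=
          mul_nonneg (div_nonneg (by linarith) hx0.le) hφx.le
        have hex := hae x hx
        rw [heq x hxR]
        nlinarith
      -- contradiction via mono_aux
      set b : ℝ := r₀ + 2 * l' / c + 1 with hb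
      have hab : r₀ ≤ b := by
        have hnn : 0 ≤ 2 * l' / c := by positivity
        rw [hb]; linarith
      have hm2 : c/2 * (b - r₀) ≤ -φ b - -φ r₀ :=
        mono_aux hab
          (fun x hx => (hφd x (lt_of_lt_of_le hR₀ hx.1)).neg)
          (fun x hx => by linarith [hder x hx.1])
      have hbR : R < b := lt_of_lt_of_le hR₀ hab
      have hcalc : c/2 * (b - r₀) = l' + c/2 := by
        rw [hb]
        field_simp
        ring
      have hφb := hφ_pos b hbR
      linarith
    rw [eventually_atTop]
    exact ⟨a, fun r hr => lt_of_le_of_lt hll' (key r hr)⟩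
  · -- upper bound: ∀ u > L, eventually φ r < u
    intro u hu
    have hu0 : 0 < u := lt_trans hL0 hu
    have hcp : 0 < (p - 1) * u ^ q - m := by
      have h := Real.rpow_lt_rpow hL0.le hu hq0
      nlinarith
    set c : ℝ := (p - 1) * u ^ q - m with hcdef
    obtain ⟨B₀, hB₀⟩ := eventually_atTop.1
      (((tendsto_rpow_atTop (show (0:ℝ) < q - 1 by linarith)).eventually_ge_atTop
          (2 / (p - 1))).and
        ((tendsto_rpow_atTop hq0).eventually_ge_atTop ((4 * (m + c/2)) / (p - 1))))
    set B : ℝ := max B₀ u with hB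
    have hBu : u ≤ B := le_max_right _ _
    have hB0 : 0 < B := lt_of_lt_of_le hu0 hBu
    have hBprop : ∀ x, B ≤ x → 2 / (p - 1) ≤ x ^ (q - 1) ∧ m + c/2 ≤ (p - 1)/4 * x ^ q := by
      intro x hx
      have h := hB₀ x (le_trans (le_max_left _ _) hx)
      refine ⟨h.1, ?_⟩
      have h2 := h.2
      have h3 := mul_le_mul_of_nonneg_left h2 (show (0:ℝ) ≤ (p-1)/4 by positivity)
      have h4 : (p - 1)/4 * ((4 * (m + c/2)) / (p - 1)) = m + c/2 := by
        field_simp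
      linarith
    set η : ℝ := min 1 (c / (4 * B)) with hη
    have hη0 : 0 < η := lt_min one_pos (div_pos hcp (by linarith))
    have hη1 : η ≤ 1 := min_le_left _ _
    have hηB : η * B ≤ c / 4 := by
      have h := min_le_right 1 (c / (4 * B))
      calc η * B ≤ c / (4 * B) * B := mul_le_mul_of_nonneg_right h hB0.le
        _ = c / 4 := by field_simp
    obtain ⟨r_e, hr_e⟩ := eventually_atTop.1
      (he_lim.eventually (lt_mem_nhds (show -m - c/4 < -m by linarith)))
    set a : ℝ := max (max r_e (R + 1)) (((N:ℝ) - 1)/η + 1) with ha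
    have haR : R < a := by
      calc R < R + 1 := by linarith
        _ ≤ max r_e (R + 1) := le_max_right _ _
        _ ≤ a := le_max_left _ _
    have ha0 : 0 < a := lt_trans hR haR
    have hadrift : ∀ x, a ≤ x → ((N:ℝ) - 1)/x ≤ η := by
      intro x hx
      have hx1 : ((N:ℝ) - 1)/η + 1 ≤ x := le_trans (le_max_right _ _) hx
      have hx0 : 0 < x := lt_of_lt_of_le ha0 hx
      rw [div_le_iff₀ hx0]
      have h1 : ((N:ℝ) - 1)/η ≤ x - 1 := by linarith
      rw [div_le_iff₀ hη0] at h1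
      nlinarith
    have hae : ∀ x, a ≤ x → -m - c/4 < e x := fun x hx =>
      hr_e x (le_trans (le_trans (le_max_left _ _) (le_max_left _ _)) hx)
    -- key derivative bounds
    have claim2 : ∀ x, a ≤ x → B ≤ φ x → (p - 1)/4 * φ x ^ q ≤ φ' x := by
      intro x hx hBφ
      have hxR : R < x := lt_of_lt_of_le haR hx
      have hx0 : 0 < x := lt_trans hR hxR
      have hφx : 0 < φ x := hφ_pos x hxR
      have hdb : ((N:ℝ) - 1)/x * φ x ≤ η * φ x :=
        mul_le_mul_of_nonneg_right (hadrift x hx) hφx.le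
      have hdb2 : η * φ x ≤ φ x := by nlinarith
      have hex := hae x hx
      have hBp := hBprop (φ x) hBφ
      have hsplit := Real.rpow_add hφx (q - 1) 1
      rw [show q - 1 + 1 = q by ring, Real.rpow_one] at hsplit
      have hq1' : 0 < φ x ^ (q - 1) := Real.rpow_pos_of_pos hφx _
      have hf1 : 2 * φ x ≤ (p - 1) * φ x ^ q := by
        have := mul_le_mul_of_nonneg_right hBp.1 hφx.le
        rw [div_mul_eq_mul_div, div_le_iff₀ hp0] at this
        nlinarith [hsplit]
      rw [heq x hxR]
      linarith [hBp.2]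
    have claim1 : ∀ x, a ≤ x → u ≤ φ x → c/2 ≤ φ' x := by
      intro x hx hux
      rcases le_or_gt B (φ x) with hcase | hcase
      · have h := claim2 x hx hcase
        have hBp := hBprop (φ x) hcase
        linarith [hBp.2]
      · have hxR : R < x := lt_of_lt_of_le haR hx
        have hx0 : 0 < x := lt_trans hR hxR
        have hφx : 0 < φ x := hφ_pos x hxR
        have huq : u ^ q ≤ φ x ^ q := Real.rpow_le_rpow hu0.le hux hq0.le
        have hdb : ((N:ℝ) - 1)/x * φ x ≤ η * φ x :=
          mul_le_mul_of_nonneg_right (hadrift x hx) hφx.le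
        have hdb2 : η * φ x ≤ η * B := mul_le_mul_of_nonneg_left hcase.le hη0.le
        have hex := hae x hx
        rw [heq x hxR]
        nlinarith
    rw [eventually_atTop]
    refine ⟨a, fun r₀ hr₀ => ?_⟩
    by_contra hcon
    push_neg at hcon
    have hR₀ : R < r₀ := lt_of_lt_of_le haR hr₀
    have hinv : ∀ x, r₀ ≤ x → u ≤ φ x :=
      persist (fun x hx => hφd x (lt_of_lt_of_le hR₀ hx)) hcon
        (fun x hx hfx =>
          lt_of_lt_of_le (half_pos hcp) (claim1 x (le_trans hr₀ hx) hfx.ge))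
    have hgrow : ∀ x, r₀ ≤ x → c/2 ≤ φ' x := fun x hx =>
      claim1 x (le_trans hr₀ hx) (hinv x hx)
    set r₂ : ℝ := r₀ + 2 * B / c with hr₂
    have hr₂0 : r₀ ≤ r₂ := by
      have hnn : 0 ≤ 2 * B / c := le_of_lt (div_pos (by linarith) hcp)
      rw [hr₂]; linarith
    have hR₂ : R < r₂ := lt_of_lt_of_le hR₀ hr₂0
    have hm1 : c/2 * (r₂ - r₀) ≤ φ r₂ - φ r₀ :=
      mono_aux hr₂0 (fun x hx => hφd x (lt_of_lt_of_le hR₀ hx.1)) (fun x hx => hgrow x hx.1)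
    have hcalc : c/2 * (r₂ - r₀) = B := by
      rw [hr₂]; field_simp; ring
    have hφr₂ : B ≤ φ r₂ := by
      have h1 := hinv r₀ le_rfl
      linarith
    have hinv2 : ∀ x, r₂ ≤ x → B ≤ φ x :=
      persist (fun x hx => hφd x (lt_of_lt_of_le hR₂ hx)) hφr₂
        (fun x hx hfx =>
          lt_of_lt_of_le (half_pos hcp)
            (claim1 x (le_trans hr₀ (le_trans hr₂0 hx)) (le_trans hBu hfx.ge)))
    have hblow : ∀ x, r₂ ≤ x → (p - 1)/4 * φ x ^ q ≤ φ' x := fun x hx =>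
      claim2 x (le_trans hr₀ (le_trans hr₂0 hx)) (hinv2 x hx)
    set K : ℝ := (q - 1) * (p - 1) / 4 with hK
    have hK0 : 0 < K := by rw [hK]; apply div_pos (mul_pos (by linarith) hp0); norm_num
    have hψd : ∀ x, r₂ ≤ x → HasDerivAt (fun y => -(φ y ^ (1 - q)))
        (-((1 - q) * φ x ^ (1 - q - 1) * φ' x)) x := by
      intro x hx
      have hxR : R < x := lt_of_lt_of_le hR₂ hx
      have hφx : 0 < φ x := hφ_pos x hxR
      have h1 : HasDerivAt (fun y : ℝ => y ^ (1 - q)) ((1 - q) * φ x ^ (1 - q - 1)) (φ x) :=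
        Real.hasDerivAt_rpow_const (Or.inl (ne_of_gt hφx))
      exact (h1.comp x (hφd x hxR)).neg
    have hψ' : ∀ x, r₂ ≤ x → K ≤ -((1 - q) * φ x ^ (1 - q - 1) * φ' x) := by
      intro x hx
      have hxR : R < x := lt_of_lt_of_le hR₂ hx
      have hφx : 0 < φ x := hφ_pos x hxR
      have hA : 0 < φ x ^ (1 - q - 1) := Real.rpow_pos_of_pos hφx _
      have hX : 0 < φ x ^ q := Real.rpow_pos_of_pos hφx _
      have hABq : φ x ^ (1 - q - 1) * φ x ^ q = 1 := by
        rw [← Real.rpow_add hφx, show 1 - q - 1 + q = (0:ℝ) by ring, Real.rpow_zero]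
      have hφ'x := hblow x hx
      have h1 : (1 - q) * φ x ^ (1 - q - 1) * φ' x ≤
          (1 - q) * φ x ^ (1 - q - 1) * ((p - 1)/4 * φ x ^ q) :=
        mul_le_mul_of_nonpos_left hφ'x (by nlinarith)
      have h2 : (1 - q) * φ x ^ (1 - q - 1) * ((p - 1)/4 * φ x ^ q) = -K := by
        rw [hK]
        linear_combination ((1 - q) * (p - 1) / 4) * hABq
      linarith
    have hψpos : 0 < φ r₂ ^ (1 - q) := Real.rpow_pos_of_pos (hφ_pos r₂ hR₂) _
    set b : ℝ := r₂ + φ r₂ ^ (1 - q) / K + 1 with hbdef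
    have hr₂b : r₂ ≤ b := by
      have hnn : 0 ≤ φ r₂ ^ (1 - q) / K := le_of_lt (div_pos hψpos hK0)
      rw [hbdef]; linarith
    have hbR : R < b := lt_of_lt_of_le hR₂ hr₂b
    have hm2 : K * (b - r₂) ≤ -(φ b ^ (1 - q)) - -(φ r₂ ^ (1 - q)) :=
      mono_aux hr₂b (fun x hx => hψd x hx.1) (fun x hx => hψ' x hx.1)
    have hψb : 0 < φ b ^ (1 - q) := Real.rpow_pos_of_pos (hφ_pos b hbR) _
    have hcalc2 : K * (b - r₂) = φ r₂ ^ (1 - q) + K := by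
      rw [hbdef]; field_simp; ring
    linarith
end

section
/- Let N ≥ 2 be an integer and let p, μ, m be real numbers with 1 < p < N, 0 ≤ μ < μ̄ := ((N−p)/p)^p and m > 0. Let f : ℝ → ℝ be continuous and satisfy (F0). Let u : (0,∞) → ℝ be a radial profile solution of the equation (hypothesis (S)) such that u(r) → 0 as r → ∞. Then u'(r)/u(r) → −(m/(p−1))^{1/p} as r → ∞. -/
open Filter Topology Set

/-! Eventually `u' < 0`: the flux `r ^ (N - 1) * |u'| ^ (p - 2) * u'` is nondecreasing once the
mass term dominates, and a flux that became nonnegative would keep `u` from decaying. For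
`v = -u' / u` the equation then becomes the Riccati-type equation
`(v ^ (p - 1))' = (p - 1) * v ^ p - (N - 1) * v ^ (p - 1) / r - m + o(1)`,
the `o(1)` collecting `μ / r ^ p` and `f(u) / u ^ (p - 1)` (small by (F0)). Below the level
`(p - 1) * v ^ p = m` the quantity `v ^ (p - 1)` decreases at a definite rate, above it `1 / v`
does; either would eventually turn negative. -/

theorem tendsto_div_rpow_nhdsGT_zero {f : ℝ → ℝ} {p q A t₀ : ℝ} (hq : p < q) (ht₀ : 0 < t₀)
    (hf : ∀ t : ℝ, |t| ≤ t₀ → |f t| ≤ A * |t| ^ (q - 1)) :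
    Tendsto (fun t => f t / t ^ (p - 1)) (𝓝[>] 0) (𝓝 0) := by
  have hlim : Tendsto (fun t : ℝ => A * t ^ (q - p)) (𝓝[>] 0) (𝓝 0) := by
    have := ((Real.continuousAt_rpow_const 0 (q - p) (Or.inr (by linarith))).tendsto.const_mul A)
    rw [Real.zero_rpow (by linarith), mul_zero] at this
    exact this.mono_left nhdsWithin_le_nhds
  refine squeeze_zero_norm' ?_ hlim
  filter_upwards [Ioc_mem_nhdsGT ht₀] with t ⟨ht, ht'⟩
  have htp : 0 < t ^ (p - 1) := Real.rpow_pos_of_pos ht _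
  calc ‖f t / t ^ (p - 1)‖ = |f t| / t ^ (p - 1) := by
        rw [Real.norm_eq_abs, abs_div, abs_of_pos htp]
    _ ≤ A * t ^ (q - 1) / t ^ (p - 1) := by
        gcongr
        simpa [abs_of_pos ht] using hf t (by rwa [abs_of_pos ht])
    _ = A * t ^ (q - p) := by
        rw [mul_div_assoc, ← Real.rpow_sub ht]
        ring_nf

theorem tendsto_radial_perturbation {p μ : ℝ} {f u : ℝ → ℝ} (hp : 0 < p)
    (hf : Tendsto (fun t => f t / t ^ (p - 1)) (𝓝[>] 0) (𝓝 0))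
    (hu_pos : ∀ᶠ r in atTop, 0 < u r) (hu0 : Tendsto u atTop (𝓝 0)) :
    Tendsto (fun r => μ / r ^ p + f (u r) / u r ^ (p - 1)) atTop (𝓝 0) := by
  have hμ : Tendsto (fun r : ℝ => μ / r ^ p) atTop (𝓝 0) :=
    tendsto_const_nhds.div_atTop (tendsto_rpow_atTop hp)
  simpa using hμ.add (hf.comp (tendsto_nhdsWithin_iff.2 ⟨hu0, hu_pos⟩))

theorem exists_nonpos_of_hasDerivAt_le_neg {F F' : ℝ → ℝ} {r₀ Y c : ℝ} (hc : 0 < c)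
    (hF : ∀ r ≥ r₀, HasDerivAt F (F' r) r) (h₀ : F r₀ ≤ Y)
    (hF' : ∀ r ≥ r₀, F r ≤ Y → F' r ≤ -c) : ∃ r ≥ r₀, F r ≤ 0 := by
  have hcont : ∀ b, ContinuousOn F (Icc r₀ b) := fun b x hx =>
    (hF x hx.1).continuousAt.continuousWithinAt
  have hderiv : ∀ b, ∀ x ∈ Ico r₀ b, HasDerivWithinAt F (F' x) (Ici x) x := fun b x hx =>
    (hF x hx.1).hasDerivWithinAt
  have hle : ∀ r ≥ r₀, F r ≤ Y := fun r hr =>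
    image_le_of_deriv_right_lt_deriv_boundary' (hcont r) (hderiv r) h₀ continuousOn_const
      (fun _ _ => hasDerivWithinAt_const _ _ _)
      (fun x hx hFx => by linarith [hF' x hx.1 hFx.le]) ⟨hr, le_rfl⟩
  have hdecay : ∀ r ≥ r₀, F r ≤ F r₀ - c * (r - r₀) := fun r hr =>
    image_le_of_deriv_right_le_deriv_boundary (hcont r) (hderiv r) (by simp)
      (by fun_prop) (fun x _ => ((hasDerivAt_id x).sub_const r₀ |>.const_mul c
        |>.const_sub (F r₀)).hasDerivWithinAt)
      (fun x hx => by simpa using hF' x hx.1 (hle x hx.1)) ⟨hr, le_rfl⟩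
  have hr₁ : r₀ ≤ r₀ + |F r₀| / c := le_add_of_nonneg_right (by positivity)
  refine ⟨_, hr₁, ?_⟩
  have := hdecay _ hr₁
  rw [add_sub_cancel_left, mul_div_cancel₀ _ hc.ne'] at this
  linarith [le_abs_self (F r₀)]

theorem hasDerivAt_rpow_neg_inv {v : ℝ → ℝ} {p Z r : ℝ} (hp : 1 < p) (hv : 0 < v r)
    (hz : HasDerivAt (fun s => v s ^ (p - 1)) Z r) :
    HasDerivAt (fun s => (v s ^ (p - 1)) ^ (-(p - 1)⁻¹)) (-Z / ((p - 1) * v r ^ p)) r := by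
  convert hz.rpow_const (p := -(p - 1)⁻¹) (Or.inl (Real.rpow_pos_of_pos hv _).ne') using 1
  have hp1 : p - 1 ≠ 0 := by linarith
  rw [← Real.rpow_mul hv.le, show (p - 1) * (-(p - 1)⁻¹ - 1) = -p by field_simp; ring,
    Real.rpow_neg hv.le]
  field_simp

theorem rpow_rpow_neg_inv {x y : ℝ} (hx : 0 ≤ x) (hy : y ≠ 0) : (x ^ y) ^ (-y⁻¹) = x⁻¹ := by
  rw [Real.rpow_neg (Real.rpow_nonneg hx _), Real.rpow_rpow_inv hx hy]

section Riccati

variable {v E : ℝ → ℝ} {p k m R : ℝ}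

theorem eventually_lt_of_riccati_s10 (hp : 1 < p) (hk : 0 ≤ k) (hv : ∀ r ≥ R, 0 < v r)
    (hz : ∀ r ≥ R, HasDerivAt (fun s => v s ^ (p - 1))
      ((p - 1) * v r ^ p - k * v r ^ (p - 1) / r - m + E r) r)
    (hE : Tendsto E atTop (𝓝 0)) {a : ℝ} (ha : 0 < a) (ham : (p - 1) * a ^ p < m) :
    ∀ᶠ r in atTop, a < v r := by
  set c := (m - (p - 1) * a ^ p) / 2 with hc_def
  have hc : 0 < c := by linarith
  obtain ⟨R₁, hR₁⟩ := eventually_atTop.1 ((hE.eventually (gt_mem_nhds hc)).and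
    ((eventually_ge_atTop R).and (eventually_gt_atTop 0)))
  filter_upwards [eventually_ge_atTop R₁] with r₀ hr₀
  by_contra! hva
  obtain ⟨r, hr, hr'⟩ := exists_nonpos_of_hasDerivAt_le_neg (Y := a ^ (p - 1)) hc
    (fun r hr => hz r (hR₁ r (hr₀.trans hr)).2.1)
    (Real.rpow_le_rpow (hv r₀ (hR₁ r₀ hr₀).2.1).le hva (by linarith)) fun r hr hle => by
      obtain ⟨hEr, hRr, hr0⟩ := hR₁ r (hr₀.trans hr)
      have hvr := hv r hRr
      have hvra : v r ≤ a := (Real.rpow_le_rpow_iff hvr.le ha.le (by linarith)).1 hle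
      have hpow : v r ^ p ≤ a ^ p := Real.rpow_le_rpow hvr.le hvra (by linarith)
      have hdrift : 0 ≤ k * v r ^ (p - 1) / r := by positivity
      linarith [mul_le_mul_of_nonneg_left hpow (by linarith : (0 : ℝ) ≤ p - 1)]
  exact (Real.rpow_pos_of_pos (hv r (hR₁ r (hr₀.trans hr)).2.1) _).not_ge hr'

theorem eventually_gt_of_riccati_s10 (hp : 1 < p) (hv : ∀ r ≥ R, 0 < v r)
    (hz : ∀ r ≥ R, HasDerivAt (fun s => v s ^ (p - 1))
      ((p - 1) * v r ^ p - k * v r ^ (p - 1) / r - m + E r) r)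
    (hE : Tendsto E atTop (𝓝 0)) (hm : 0 ≤ m) {b : ℝ} (hb : 0 < b) (hbm : m < (p - 1) * b ^ p) :
    ∀ᶠ r in atTop, v r < b := by
  have hp1 : 0 < p - 1 := by linarith
  have hbp : 0 < (p - 1) * b ^ p := by positivity
  set c := ((p - 1) * b ^ p - m) / (4 * ((p - 1) * b ^ p))
  have hc : 0 < c := by simp only [c]; apply div_pos <;> linarith
  have hmc : m = (1 - 4 * c) * ((p - 1) * b ^ p) := by simp only [c]; field_simp; ring
  have hc4 : 4 * c ≤ 1 := by
    simp only [c]; rw [mul_div_assoc', div_le_one (by positivity)]; linarith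
  obtain ⟨R₁, hR₁⟩ := eventually_atTop.1 ((hE.eventually (lt_mem_nhds (neg_lt_zero.2 (by
    positivity : 0 < c * ((p - 1) * b ^ p))))).and ((eventually_ge_atTop R).and
    (eventually_ge_atTop (max 1 (k / (c * (p - 1) * b))))))
  filter_upwards [eventually_ge_atTop R₁] with r₀ hr₀
  by_contra! hvb
  obtain ⟨r, hr, hr'⟩ := exists_nonpos_of_hasDerivAt_le_neg (Y := b⁻¹) (c := c) hc
    (fun r hr => hasDerivAt_rpow_neg_inv hp (hv r (hR₁ r (hr₀.trans hr)).2.1)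
      (hz r (hR₁ r (hr₀.trans hr)).2.1))
    (by rw [rpow_rpow_neg_inv (hv r₀ (hR₁ r₀ hr₀).2.1).le hp1.ne']
        exact inv_anti₀ hb hvb) fun r hr hle => by
      obtain ⟨hEr, hRr, hrk⟩ := hR₁ r (hr₀.trans hr)
      have hvr := hv r hRr
      rw [rpow_rpow_neg_inv hvr.le hp1.ne', inv_le_inv₀ hvr hb] at hle
      have hr0 : 0 < r := lt_of_lt_of_le one_pos (le_of_max_le_left hrk)
      have hpow : b ^ p ≤ v r ^ p := Real.rpow_le_rpow hb.le hle (by linarith)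
      have hvp : 0 < (p - 1) * v r ^ p := by positivity
      have hdrift : k * v r ^ (p - 1) / r ≤ c * ((p - 1) * v r ^ p) := by
        have hkr : k / r ≤ c * (p - 1) * b := (div_le_iff₀ hr0).2 (by
          rw [← div_le_iff₀' (by positivity)]; exact le_of_max_le_right hrk)
        have hvv : v r * v r ^ (p - 1) = v r ^ p := by
          rw [← Real.rpow_one_add' hvr.le (by linarith)]; ring_nf
        calc k * v r ^ (p - 1) / r = k / r * v r ^ (p - 1) := by ring
          _ ≤ c * (p - 1) * b * v r ^ (p - 1) := by gcongr
          _ ≤ c * (p - 1) * v r * v r ^ (p - 1) := by gcongr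
          _ = c * ((p - 1) * v r ^ p) := by rw [← hvv]; ring
      have hPv : (1 - 4 * c) * ((p - 1) * b ^ p) ≤ (1 - 4 * c) * ((p - 1) * v r ^ p) := by
        gcongr
      have hcv : c * ((p - 1) * b ^ p) ≤ c * ((p - 1) * v r ^ p) := by gcongr
      rw [div_le_iff₀ hvp]
      linarith
  exact (Real.rpow_pos_of_pos (Real.rpow_pos_of_pos (hv r (hR₁ r (hr₀.trans hr)).2.1) _)
    _).not_ge hr'

theorem tendsto_of_riccati_s10 (hp : 1 < p) (hk : 0 ≤ k) (hm : 0 ≤ m) (hv : ∀ r ≥ R, 0 < v r)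
    (hz : ∀ r ≥ R, HasDerivAt (fun s => v s ^ (p - 1))
      ((p - 1) * v r ^ p - k * v r ^ (p - 1) / r - m + E r) r)
    (hE : Tendsto E atTop (𝓝 0)) :
    Tendsto v atTop (𝓝 ((m / (p - 1)) ^ (1 / p))) := by
  have hp0 : 0 < p := by linarith
  have hp1 : 0 < p - 1 := by linarith
  set ℓ := (m / (p - 1)) ^ (1 / p)
  have hℓ : ℓ ^ p = m / (p - 1) := by
    rw [← Real.rpow_mul (by positivity), one_div_mul_cancel hp0.ne', Real.rpow_one]
  refine tendsto_order.2 ⟨fun a ha => ?_, fun b hb => ?_⟩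
  · rcases le_or_gt a 0 with ha0 | ha0
    · filter_upwards [eventually_ge_atTop R] with r hr using ha0.trans_lt (hv r hr)
    · have := Real.rpow_lt_rpow ha0.le ha hp0
      rw [hℓ, lt_div_iff₀' hp1] at this
      exact eventually_lt_of_riccati_s10 hp hk hv hz hE ha0 this
  · have hb0 : 0 < b := lt_of_le_of_lt (by positivity) hb
    have := Real.rpow_lt_rpow (by positivity) hb hp0
    rw [hℓ, div_lt_iff₀' hp1] at this
    exact eventually_gt_of_riccati_s10 hp hv hz hE hm hb0 this

end Riccati

theorem rpow_abs_mul_of_neg {x y : ℝ} (p : ℝ) (hx : 0 < x) (hy : y < 0) :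
    |y| ^ (p - 2) * y = -(x ^ (p - 1) * (-y / x) ^ (p - 1)) := by
  have hy' : 0 < -y := neg_pos.2 hy
  rw [abs_of_neg hy, Real.div_rpow hy'.le hx.le, mul_div_cancel₀ _ (by positivity),
    show p - 1 = p - 2 + 1 by ring, Real.rpow_add_one hy'.ne']
  ring

theorem hasDerivAt_rpow_neg_div {N p μ m : ℝ} {f u u' : ℝ → ℝ} {r : ℝ}
    (hsign : ∀ᶠ s in 𝓝 r, 0 < s ∧ 0 < u s ∧ u' s < 0) (hu' : HasDerivAt u (u' r) r)
    (hS : HasDerivAt (fun s => s ^ (N - 1) * |u' s| ^ (p - 2) * u' s)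
      (-(r ^ (N - 1) * (μ / r ^ p * u r ^ (p - 1) - m * u r ^ (p - 1) + f (u r)))) r) :
    HasDerivAt (fun s => (-u' s / u s) ^ (p - 1))
      ((p - 1) * (-u' r / u r) ^ p - (N - 1) * (-u' r / u r) ^ (p - 1) / r - m
        + (μ / r ^ p + f (u r) / u r ^ (p - 1))) r := by
  obtain ⟨hr, hur, hu'r⟩ := hsign.self_of_nhds
  have hD : HasDerivAt (fun s => s ^ (N - 1) * u s ^ (p - 1))
      ((N - 1) * r ^ (N - 1 - 1) * u r ^ (p - 1)
        + r ^ (N - 1) * (u' r * (p - 1) * u r ^ (p - 1 - 1))) r :=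
    (Real.hasDerivAt_rpow_const (Or.inl hr.ne')).mul (hu'.rpow_const (Or.inl hur.ne'))
  -- the flux is `-(s ^ (N - 1) * u ^ (p - 1))` times the function being differentiated
  have heq : (fun s => (-u' s / u s) ^ (p - 1)) =ᶠ[𝓝 r]
      fun s => -(s ^ (N - 1) * |u' s| ^ (p - 2) * u' s) / (s ^ (N - 1) * u s ^ (p - 1)) := by
    filter_upwards [hsign] with s ⟨hs, hus, hu's⟩
    rw [mul_assoc, rpow_abs_mul_of_neg p hus hu's]
    field_simp
  refine ((hS.neg.div hD (by positivity)).congr_of_eventuallyEq heq).congr_deriv ?_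
  have hv : 0 < -u' r / u r := div_pos (neg_pos.2 hu'r) hur
  simp only [Pi.neg_apply]
  rw [mul_assoc (r ^ (N - 1)), rpow_abs_mul_of_neg p hur hu'r, Real.rpow_sub_one hr.ne' (N - 1),
    Real.rpow_sub_one hur.ne' (p - 1), show p = p - 1 + 1 by ring, Real.rpow_add_one hv.ne',
    show p - 1 + 1 - 1 = p - 1 by ring]
  field_simp
  ring

theorem not_tendsto_zero_of_deriv_nonneg {u u' : ℝ → ℝ} {r : ℝ} (hu : 0 < u r)
    (hd : ∀ s ≥ r, HasDerivAt u (u' s) s) (hd' : ∀ s ≥ r, 0 ≤ u' s) :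
    ¬Tendsto u atTop (𝓝 0) := fun hu0 => by
  have hmono : MonotoneOn u (Ici r) :=
    monotoneOn_of_hasDerivWithinAt_nonneg (convex_Ici r)
      (fun s hs => (hd s hs).continuousAt.continuousWithinAt)
      (fun s hs => (hd s (interior_subset hs)).hasDerivWithinAt)
      fun s hs => hd' s (interior_subset hs)
  have := ge_of_tendsto hu0 (eventually_ge_atTop r |>.mono fun s hs =>
    hmono self_mem_Ici hs hs)
  linarith

theorem rpow_mul_rpow_abs_mul_neg_iff {s y : ℝ} (a b : ℝ) (hs : 0 < s) :
    s ^ a * |y| ^ b * y < 0 ↔ y < 0 := by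
  refine ⟨fun h => ?_, fun hy => mul_neg_of_pos_of_neg ?_ hy⟩
  · by_contra! hy
    exact h.not_ge (by positivity)
  · exact mul_pos (Real.rpow_pos_of_pos hs _) (Real.rpow_pos_of_pos (abs_pos.2 hy.ne) _)

theorem eventually_deriv_neg_of_radial {N p μ m : ℝ} {f u u' : ℝ → ℝ}
    (hu_pos : ∀ r : ℝ, 0 < r → 0 < u r) (hu' : ∀ r : ℝ, 0 < r → HasDerivAt u (u' r) r)
    (hS : ∀ r : ℝ, 0 < r →
      HasDerivAt (fun s : ℝ => s ^ (N - 1) * |u' s| ^ (p - 2) * u' s)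
        (-(r ^ (N - 1) * (μ / r ^ p * u r ^ (p - 1) - m * u r ^ (p - 1) + f (u r)))) r)
    (hu0 : Tendsto u atTop (𝓝 0))
    (hE : ∀ᶠ r in atTop, μ / r ^ p + f (u r) / u r ^ (p - 1) ≤ m) :
    ∀ᶠ r in atTop, u' r < 0 := by
  obtain ⟨R, hR⟩ := eventually_atTop.1 (hE.and (eventually_gt_atTop 0))
  set g := fun s : ℝ => s ^ (N - 1) * |u' s| ^ (p - 2) * u' s
  have hg : MonotoneOn g (Ici R) := by
    refine monotoneOn_of_hasDerivWithinAt_nonneg (convex_Ici R)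
      (fun s hs => (hS s (hR s hs).2).continuousAt.continuousWithinAt)
      (fun s hs => (hS s (hR s (interior_subset hs)).2).hasDerivWithinAt) fun s hs => ?_
    obtain ⟨hEs, hs⟩ := hR s (interior_subset hs)
    have hus := hu_pos s hs
    have hfac : -(s ^ (N - 1) * (μ / s ^ p * u s ^ (p - 1) - m * u s ^ (p - 1) + f (u s))) =
        s ^ (N - 1) * u s ^ (p - 1) * (m - (μ / s ^ p + f (u s) / u s ^ (p - 1))) := by
      field_simp
      ring
    rw [hfac]
    exact mul_nonneg (by positivity) (by linarith)
  filter_upwards [eventually_ge_atTop R] with r hr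
  by_contra! hu'r
  refine not_tendsto_zero_of_deriv_nonneg (hu_pos r (hR r hr).2)
    (fun s hs => hu' s (hR s (hr.trans hs)).2) (fun s hs => ?_) hu0
  by_contra! hu's
  have hgs := (rpow_mul_rpow_abs_mul_neg_iff (N - 1) (p - 2) (hR s (hr.trans hs)).2).2 hu's
  have hgr := (rpow_mul_rpow_abs_mul_neg_iff (N - 1) (p - 2) (hR r hr).2).not.2 hu'r.not_gt
  exact hgr (lt_of_le_of_lt (hg hr (hr.trans hs) hs) hgs)

theorem stmt_10_general
    (N : ℕ) (hN : 2 ≤ N) (p μ m : ℝ)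
    (hp1 : 1 < p)
    (hm : 0 < m)
    (f : ℝ → ℝ)
    (hF0 : ∃ A > (0:ℝ), ∃ q > p, ∃ t₀ > (0:ℝ),
      ∀ t : ℝ, |t| ≤ t₀ → |f t| ≤ A * |t| ^ (q - 1))
    (u u' : ℝ → ℝ)
    (hu_pos : ∀ r : ℝ, 0 < r → 0 < u r)
    (hu' : ∀ r : ℝ, 0 < r → HasDerivAt u (u' r) r)
    (hS : ∀ r : ℝ, 0 < r →
      HasDerivAt (fun s : ℝ => s ^ ((N : ℝ) - 1) * |u' s| ^ (p - 2) * u' s)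
        (-(r ^ ((N : ℝ) - 1) *
          (μ / r ^ p * u r ^ (p - 1) - m * u r ^ (p - 1) + f (u r)))) r)
    (hu0 : Tendsto u atTop (𝓝 0)) :
    Tendsto (fun r : ℝ => u' r / u r) atTop (𝓝 (-(m / (p - 1)) ^ ((1 : ℝ) / p))) := by
  obtain ⟨A, -, q, hq, t₀, ht₀, hfq⟩ := hF0
  have hE := tendsto_radial_perturbation (μ := μ) (by linarith)
    (tendsto_div_rpow_nhdsGT_zero hq ht₀ hfq) ((eventually_gt_atTop 0).mono hu_pos) hu0
  obtain ⟨R, hR⟩ := eventually_atTop.1 ((eventually_deriv_neg_of_radial hu_pos hu' hS hu0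
    (hE.eventually (ge_mem_nhds hm))).and (eventually_gt_atTop 0))
  have hsign : ∀ r ≥ R + 1, ∀ᶠ s in 𝓝 r, 0 < s ∧ 0 < u s ∧ u' s < 0 := fun r hr => by
    filter_upwards [Ioi_mem_nhds (show R < r by linarith)] with s hs
    exact ⟨(hR s hs.le).2, hu_pos s (hR s hs.le).2, (hR s hs.le).1⟩
  have hN1 : (0 : ℝ) ≤ N - 1 := by
    have : (2 : ℝ) ≤ N := by exact_mod_cast hN
    linarith
  have hv := tendsto_of_riccati_s10 (v := fun r => -u' r / u r) hp1 hN1 hm.le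
    (fun r hr => have h := (hsign r hr).self_of_nhds; div_pos (neg_pos.2 h.2.2) h.2.1)
    (fun r hr => hasDerivAt_rpow_neg_div (hsign r hr) (hu' r (hsign r hr).self_of_nhds.1)
      (hS r (hsign r hr).self_of_nhds.1)) hE
  simpa only [neg_div, neg_neg] using hv.neg

theorem stmt_10
    (N : ℕ) (hN : 2 ≤ N) (p μ m : ℝ)
    (hp1 : 1 < p) (hpN : p < N)
    (hμ0 : 0 ≤ μ) (hμ : μ < (((N : ℝ) - p) / p) ^ p)
    (hm : 0 < m)
    (f : ℝ → ℝ) (hf : Continuous f)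
    (hF0 : ∃ A > (0:ℝ), ∃ q > p, ∃ t₀ > (0:ℝ),
      ∀ t : ℝ, |t| ≤ t₀ → |f t| ≤ A * |t| ^ (q - 1))
    (u u' : ℝ → ℝ)
    (hu_pos : ∀ r : ℝ, 0 < r → 0 < u r)
    (hu' : ∀ r : ℝ, 0 < r → HasDerivAt u (u' r) r)
    (hS : ∀ r : ℝ, 0 < r →
      HasDerivAt (fun s : ℝ => s ^ ((N : ℝ) - 1) * |u' s| ^ (p - 2) * u' s)
        (-(r ^ ((N : ℝ) - 1) *
          (μ / r ^ p * u r ^ (p - 1) - m * u r ^ (p - 1) + f (u r)))) r)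
    (hu0 : Tendsto u atTop (𝓝 0)) :
    Tendsto (fun r : ℝ => u' r / u r) atTop (𝓝 (-(m / (p - 1)) ^ ((1 : ℝ) / p))) :=
  stmt_10_general N hN p μ m hp1 hm f hF0 u u' hu_pos hu' hS hu0
end

section
/- Let N ≥ 2 be an integer, let p > 1, m > 0, γ ∈ ℝ and 0 < δ < 1/2. Set β = (m/(p−1))^{1/p} and v(r) = r^{−(N−1)/(p(p−1))}·e^{−βr}·(1 − γ·r^{−δ}) for r > 0. Then there exist R > 0 and a function Q : (R,∞) → ℝ such that for all r > R one has v(r) > 0, v'(r) < 0, and −d/dr(|v'(r)|^{p−2}·v'(r)) − ((N−1)/r)·|v'(r)|^{p−2}·v'(r) + m·v(r)^{p−1} = Q(r)·v(r)^{p−1}, and moreover the function r ↦ Q(r) − Q₀·r^{−(δ+1)} is O(r^{−(2δ+1)}) as r → ∞, where Q₀ = (m/(p−1))^{(p−1)/p}·p·(p−1)·δ·γ. -/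
open Filter Topology Set Asymptotics

/-
Write `v = r^(-a) e^(-βr) h` with `h = 1 - γ r^(-δ)`. Then `v' = -g v` with
`g = β + a/r - γδ r^(-δ-1)/h`, and for such `v` the radial operator is multiplication by
`Q = m + (p-1) g^(p-2) (g' - g²) + ((N-1)/r) g^(p-1)`. Expanding `g^p` and `g^(p-1)` around `β`,
the choice `m = (p-1) β^p` kills the constant term and `a = (N-1)/(p(p-1))` the `1/r` term,
leaving `Q₀ r^(-(δ+1))/h`. Every remainder is `O(r^(-(2δ+1)))`: the Taylor remainders are
`O((g - β)²) = O(r^(-2))`, `g' = O(r^(-2) + r^(-δ-2))` (both using `δ ≤ 1/2`), and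
`Q₀ r^(-(δ+1)) (1/h - 1) = Q₀ γ r^(-(2δ+1))/h`.
-/

theorem isBigO_rpow_rpow_atTop {s t : ℝ} (hst : s ≤ t) :
    (fun r : ℝ => r ^ s) =O[atTop] fun r => r ^ t := by
  refine IsBigO.of_bound 1 ?_
  filter_upwards [eventually_ge_atTop 1] with r hr
  rw [Real.norm_of_nonneg (by positivity), Real.norm_of_nonneg (by positivity), one_mul]
  exact Real.rpow_le_rpow_of_exponent_le hr hst

theorem isBigO_rpow_mul_rpow_atTop {s t u : ℝ} (hstu : s + t ≤ u) :
    (fun r : ℝ => r ^ s * r ^ t) =O[atTop] fun r => r ^ u :=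
  ((isBigO_rpow_rpow_atTop hstu).congr' (by
    filter_upwards [eventually_gt_atTop 0] with r hr
    rw [Real.rpow_add hr]) EventuallyEq.rfl)

theorem isBigO_sub_sub_mul_sq {f f' : ℝ → ℝ} {x : ℝ}
    (hf : ∀ᶠ y in 𝓝 x, HasDerivAt f (f' y) y) (hf' : DifferentiableAt ℝ f' x) :
    (fun y => f y - f x - f' x * (y - x)) =O[𝓝 x] fun y => (y - x) ^ 2 := by
  obtain ⟨C, hC0, hC⟩ := hf'.hasDerivAt.isBigO_sub.exists_nonneg
  obtain ⟨ε, hε, hball⟩ := Metric.eventually_nhds_iff_ball.1 (hf.and hC.bound)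
  refine IsBigO.of_bound C ?_
  filter_upwards [Metric.ball_mem_nhds x hε] with y hy
  have hsub : Metric.closedBall x ‖y - x‖ ⊆ Metric.ball x ε :=
    Metric.closedBall_subset_ball (by rwa [← dist_eq_norm])
  have key := Convex.norm_image_sub_le_of_norm_hasDerivWithin_le
    (f := fun z => f z - f' x * z) (f' := fun z => f' z - f' x) (C := C * ‖y - x‖)
    (fun z hz => (((hball z (hsub hz)).1.sub
      ((hasDerivAt_id z).const_mul (f' x))).congr_deriv (by simp)).hasDerivWithinAt)
    (fun z hz => ((hball z (hsub hz)).2.trans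
      (mul_le_mul_of_nonneg_left (by rwa [← dist_eq_norm]) hC0)))
    (convex_closedBall x ‖y - x‖) (Metric.mem_closedBall_self (norm_nonneg _))
    (by rw [Metric.mem_closedBall, dist_eq_norm])
  calc ‖f y - f x - f' x * (y - x)‖ = ‖(f y - f' x * y) - (f x - f' x * x)‖ := by ring_nf
    _ ≤ C * ‖y - x‖ * ‖y - x‖ := key
    _ = C * ‖(y - x) ^ 2‖ := by rw [norm_pow]; ring

theorem Asymptotics.IsBigO.div_of_tendsto {α : Type*} {l : Filter α} {f g h : α → ℝ} {c : ℝ}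
    (hf : f =O[l] g) (hh : Tendsto h l (𝓝 c)) (hc : c ≠ 0) :
    (fun x => f x / h x) =O[l] g := by
  simpa [div_eq_mul_inv] using hf.mul ((hh.inv₀ hc).isBigO_one ℝ)

noncomputable def radialPotential (p m c : ℝ) (g g' : ℝ → ℝ) (r : ℝ) : ℝ :=
  m + (p - 1) * g r ^ (p - 2) * (g' r - g r ^ 2) + c / r * g r ^ (p - 1)

theorem abs_neg_rpow_mul_neg {y : ℝ} (hy : 0 < y) (p : ℝ) :
    |-y| ^ (p - 2) * -y = -y ^ (p - 1) := by
  rw [abs_neg, abs_of_pos hy, mul_neg, ← Real.rpow_add_one hy.ne']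
  ring_nf

theorem radial_pLaplacian_eq {v g g' : ℝ → ℝ} {p m c r : ℝ}
    (hv : ∀ᶠ s in 𝓝 r, HasDerivAt v (-(v s * g s)) s ∧ 0 < v s ∧ 0 < g s)
    (hg : HasDerivAt g (g' r) r) :
    -(deriv (fun s => |deriv v s| ^ (p - 2) * deriv v s) r)
        - c / r * (|deriv v r| ^ (p - 2) * deriv v r) + m * v r ^ (p - 1)
      = radialPotential p m c g g' r * v r ^ (p - 1) := by
  have hflux : (fun s => |deriv v s| ^ (p - 2) * deriv v s) =ᶠ[𝓝 r]
      fun s => -(v s * g s) ^ (p - 1) := by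
    filter_upwards [hv] with s ⟨hvs, hv0, hg0⟩
    rw [hvs.deriv, abs_neg_rpow_mul_neg (mul_pos hv0 hg0)]
  obtain ⟨hvr, hv0, hg0⟩ := hv.self_of_nhds
  have hvg := mul_pos hv0 hg0
  have hflux' : HasDerivAt (fun s => -(v s * g s) ^ (p - 1))
      (-((-(v r * g r) * g r + v r * g' r) * (p - 1) * (v r * g r) ^ (p - 1 - 1))) r :=
    ((hvr.mul hg).rpow_const (Or.inl hvg.ne')).neg
  rw [hflux.deriv_eq, hflux'.deriv, hvr.deriv, abs_neg_rpow_mul_neg hvg, radialPotential,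
    Real.mul_rpow hv0.le hg0.le, show p - 1 - 1 = p - 2 by ring, Real.mul_rpow hv0.le hg0.le,
    show p - 1 = p - 2 + 1 by ring, Real.rpow_add_one hv0.ne', Real.rpow_add_one hg0.ne']
  ring

section Profile

variable (a β γ δ : ℝ)

noncomputable def correction (r : ℝ) : ℝ := 1 - γ * r ^ (-δ)

noncomputable def profile (r : ℝ) : ℝ := r ^ (-a) * Real.exp (-β * r) * correction γ δ r

/-- `-v'/v` for `v = profile a β γ δ`. -/
noncomputable def decayRate (r : ℝ) : ℝ :=
  β + a * r ^ (-1 : ℝ) - γ * δ * r ^ (-(δ + 1)) / correction γ δ r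

noncomputable def decayRateDeriv (r : ℝ) : ℝ :=
  -a * r ^ (-2 : ℝ) + γ * δ * (δ + 1) * r ^ (-(δ + 2)) / correction γ δ r
    + (γ * δ) ^ 2 * r ^ (-(2 * δ + 2)) / correction γ δ r ^ 2

variable {a β γ δ}

theorem hasDerivAt_correction {r : ℝ} (hr : 0 < r) :
    HasDerivAt (correction γ δ) (γ * δ * r ^ (-(δ + 1))) r := by
  refine (((Real.hasDerivAt_rpow_const (Or.inl hr.ne')).const_mul γ).const_sub 1).congr_deriv ?_
  rw [show -δ - 1 = -(δ + 1) by ring]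
  ring

theorem hasDerivAt_profile {r : ℝ} (hr : 0 < r) (hc : correction γ δ r ≠ 0) :
    HasDerivAt (profile a β γ δ) (-(profile a β γ δ r * decayRate a β γ δ r)) r := by
  have hexp : HasDerivAt (fun s => Real.exp (-β * s)) (Real.exp (-β * r) * -β) r := by
    simpa using ((hasDerivAt_id r).const_mul (-β)).exp
  refine (((Real.hasDerivAt_rpow_const (Or.inl hr.ne')).mul hexp).mul
    (hasDerivAt_correction hr)).congr_deriv ?_
  rw [profile, decayRate, show -a - 1 = -a + -1 by ring, Real.rpow_add hr, Pi.mul_apply]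
  field_simp
  ring

theorem hasDerivAt_decayRate {r : ℝ} (hr : 0 < r) (hc : correction γ δ r ≠ 0) :
    HasDerivAt (decayRate a β γ δ) (decayRateDeriv a γ δ r) r := by
  refine (((hasDerivAt_const r β).add
    ((Real.hasDerivAt_rpow_const (Or.inl hr.ne')).const_mul a)).sub
    (((Real.hasDerivAt_rpow_const (Or.inl hr.ne')).const_mul (γ * δ)).div
      (hasDerivAt_correction hr) hc)).congr_deriv ?_
  rw [decayRateDeriv, show (-2 : ℝ) = -1 - 1 by norm_num, show -(δ + 2) = -(δ + 1) - 1 by ring,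
    show -(2 * δ + 2) = -(δ + 1) + -(δ + 1) by ring, Real.rpow_add hr]
  field_simp
  ring

variable (γ) in
theorem tendsto_correction (hδ : 0 < δ) : Tendsto (correction γ δ) atTop (𝓝 1) := by
  have h := ((tendsto_rpow_neg_atTop hδ).const_mul γ).const_sub 1
  rwa [mul_zero, sub_zero] at h

variable (a β γ) in
theorem tendsto_decayRate (hδ : 0 < δ) : Tendsto (decayRate a β γ δ) atTop (𝓝 β) := by
  have hinv : Tendsto (fun r : ℝ => r ^ (-1 : ℝ)) atTop (𝓝 0) := tendsto_rpow_neg_atTop one_pos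
  have h := ((tendsto_const_nhds (x := β)).add (hinv.const_mul a)).sub
    (((tendsto_rpow_neg_atTop (add_pos hδ one_pos)).const_mul (γ * δ)).div
      (tendsto_correction γ hδ) one_ne_zero)
  rwa [mul_zero, mul_zero, zero_div, add_zero, sub_zero] at h

variable (a β γ) in
theorem decayRate_sub_isBigO (hδ : 0 < δ) :
    (fun r => decayRate a β γ δ r - β) =O[atTop] fun r => r ^ (-1 : ℝ) := by
  refine (((isBigO_refl _ _).const_mul_left a).sub
    (((isBigO_rpow_rpow_atTop (by linarith : -(δ + 1) ≤ -1)).const_mul_left (γ * δ)).div_of_tendsto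
      (tendsto_correction γ hδ) one_ne_zero)).congr_left fun r => ?_
  rw [decayRate]
  ring

variable (a γ) in
theorem decayRateDeriv_isBigO (hδ : 0 < δ) (hδ' : δ ≤ 1 / 2) :
    decayRateDeriv a γ δ =O[atTop] fun r => r ^ (-(2 * δ + 1)) := by
  have hc := tendsto_correction γ hδ
  refine (((isBigO_rpow_rpow_atTop (by linarith)).const_mul_left (-a)).add
    (((isBigO_rpow_rpow_atTop (by linarith)).const_mul_left _).div_of_tendsto hc one_ne_zero)).add
    (((isBigO_rpow_rpow_atTop (by linarith)).const_mul_left _).div_of_tendsto (hc.pow 2)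
      (by norm_num))

theorem eventually_profile_flow (hβ : 0 < β) (hδ : 0 < δ) :
    ∀ᶠ r in atTop, HasDerivAt (profile a β γ δ) (-(profile a β γ δ r * decayRate a β γ δ r)) r ∧
      0 < profile a β γ δ r ∧ 0 < decayRate a β γ δ r ∧
      HasDerivAt (decayRate a β γ δ) (decayRateDeriv a γ δ r) r := by
  filter_upwards [eventually_gt_atTop 0, (tendsto_correction γ hδ).eventually (lt_mem_nhds one_pos),
    (tendsto_decayRate a β γ hδ).eventually (lt_mem_nhds hβ)] with r hr hc hg
  exact ⟨hasDerivAt_profile hr hc.ne', by unfold profile; positivity, hg,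
    hasDerivAt_decayRate hr hc.ne'⟩

theorem exists_radial_flow_of_eq_profile (hβ : 0 < β) (hδ : 0 < δ) {v : ℝ → ℝ}
    (hv : ∀ r, 0 < r → v r = profile a β γ δ r) :
    ∃ R, 0 < R ∧ ∀ r, R < r →
      (∀ᶠ s in 𝓝 r, HasDerivAt v (-(v s * decayRate a β γ δ s)) s ∧
        0 < v s ∧ 0 < decayRate a β γ δ s) ∧
      HasDerivAt (decayRate a β γ δ) (decayRateDeriv a γ δ r) r := by
  obtain ⟨R, hR⟩ := eventually_atTop.1 (eventually_profile_flow (a := a) (γ := γ) hβ hδ)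
  refine ⟨max R 1, by positivity, fun r hr => ⟨?_, (hR r (le_max_left R 1 |>.trans hr.le)).2.2.2⟩⟩
  filter_upwards [Ioi_mem_nhds hr] with s hs
  obtain ⟨hRs, hs1⟩ := max_lt_iff.1 (mem_Ioi.1 hs)
  have hvs : v =ᶠ[𝓝 s] profile a β γ δ := by
    filter_upwards [Ioi_mem_nhds (one_pos.trans hs1)] with t ht using hv t ht
  obtain ⟨hder, hpos, hg, -⟩ := hR s hRs.le
  rw [hvs.self_of_nhds]
  exact ⟨hder.congr_of_eventuallyEq hvs, hpos, hg⟩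

theorem radialPotential_sub_isBigO {p m c : ℝ} (hβ : 0 < β) (hδ : 0 < δ)
    (hδ' : δ ≤ 1 / 2) (hm : m = (p - 1) * β ^ p) (hc : c = p * (p - 1) * a) :
    (fun r => radialPotential p m c (decayRate a β γ δ) (decayRateDeriv a γ δ) r
        - β ^ (p - 1) * p * (p - 1) * δ * γ * r ^ (-(δ + 1)))
      =O[atTop] fun r => r ^ (-(2 * δ + 1)) := by
  set g := decayRate a β γ δ with hg_def
  have hg := tendsto_decayRate a β γ hδ
  have hε := decayRate_sub_isBigO a β γ hδ
  have hTaylor : (fun r => g r ^ p - β ^ p - p * β ^ (p - 1) * (g r - β))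
      =O[atTop] fun r => r ^ (-(2 * δ + 1)) := by
    have hpow : ∀ᶠ y in 𝓝 β, HasDerivAt (fun y => y ^ p) (p * y ^ (p - 1)) y := by
      filter_upwards [lt_mem_nhds hβ] with y hy
      exact Real.hasDerivAt_rpow_const (Or.inl hy.ne')
    have hpow' : DifferentiableAt ℝ (fun y => p * y ^ (p - 1)) β := by
      fun_prop (disch := exact Or.inl hβ.ne')
    refine ((isBigO_sub_sub_mul_sq hpow hpow').comp_tendsto hg).trans ?_
    exact ((hε.mul hε).congr_left fun r => (sq _).symm).trans
      (isBigO_rpow_mul_rpow_atTop (by linarith))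
  have hDeriv : (fun r => g r ^ (p - 2) * decayRateDeriv a γ δ r)
      =O[atTop] fun r => r ^ (-(2 * δ + 1)) :=
    (((hg.rpow_const (Or.inl hβ.ne')).isBigO_one ℝ).mul
      (decayRateDeriv_isBigO a γ hδ hδ')).congr_right fun r => one_mul _
  have hLip : (fun r => r ^ (-1 : ℝ) * (g r ^ (p - 1) - β ^ (p - 1)))
      =O[atTop] fun r => r ^ (-(2 * δ + 1)) :=
    ((isBigO_refl _ _).mul (((Real.hasDerivAt_rpow_const (p := p - 1)
      (Or.inl hβ.ne')).isBigO_sub.comp_tendsto hg).trans hε)).trans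
      (isBigO_rpow_mul_rpow_atTop (by linarith))
  have hCorr : (fun r => r ^ (-(δ + 1)) * r ^ (-δ) / correction γ δ r)
      =O[atTop] fun r => r ^ (-(2 * δ + 1)) :=
    (isBigO_rpow_mul_rpow_atTop (by linarith)).div_of_tendsto (tendsto_correction γ hδ)
      one_ne_zero
  refine ((((hTaylor.const_mul_left (-(p - 1))).add (hDeriv.const_mul_left (p - 1))).add
    (hLip.const_mul_left c)).add (hCorr.const_mul_left (β ^ (p - 1) * p * (p - 1) * δ * γ * γ))
    ).congr' ?_ EventuallyEq.rfl
  filter_upwards [eventually_gt_atTop 0, hg.eventually (lt_mem_nhds hβ),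
    (tendsto_correction γ hδ).eventually_ne one_ne_zero] with r hr hg0 hcorr
  have hgp : g r ^ p = g r ^ (p - 2) * g r ^ 2 := by
    rw [← Real.rpow_natCast, ← Real.rpow_add hg0, Nat.cast_ofNat, sub_add_cancel]
  have hgr : g r = β + a * r⁻¹ - γ * δ * r ^ (-(δ + 1)) / correction γ δ r := by
    rw [hg_def, decayRate, Real.rpow_neg_one]
  -- `m = (p - 1) β ^ p` and `c = p (p - 1) a` cancel the terms of order `1` and `1 / r`
  simp only [radialPotential]
  rw [hgp, Real.rpow_neg_one]
  generalize g r ^ (p - 2) = A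
  generalize g r ^ (p - 1) = B
  rw [hgr, hm, hc]
  rw [correction] at hcorr ⊢
  field_simp
  ring

end Profile

theorem stmt_12_general
    (N : ℕ) (p m γ δ : ℝ)
    (hp : 1 < p) (hm : 0 < m) (hδ : 0 < δ ∧ δ < 1 / 2)
    (β : ℝ) (hβ : β = (m / (p - 1)) ^ ((1 : ℝ) / p))
    (v : ℝ → ℝ)
    (hv : ∀ r : ℝ, 0 < r →
      v r = r ^ (-(((N : ℝ) - 1) / (p * (p - 1)))) * Real.exp (-β * r) *
        (1 - γ * r ^ (-δ))) :
    ∃ R : ℝ, 0 < R ∧ ∃ Q : ℝ → ℝ,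
      (∀ r : ℝ, R < r →
        0 < v r ∧ deriv v r < 0 ∧
        -(deriv (fun s : ℝ => |deriv v s| ^ (p - 2) * deriv v s) r)
            - (((N : ℝ) - 1) / r) * (|deriv v r| ^ (p - 2) * deriv v r)
            + m * v r ^ (p - 1)
          = Q r * v r ^ (p - 1)) ∧
      (fun r : ℝ =>
          Q r - (m / (p - 1)) ^ ((p - 1) / p) * p * (p - 1) * δ * γ * r ^ (-(δ + 1)))
        =O[atTop] fun r : ℝ => r ^ (-(2 * δ + 1)) := by
  have hp1 : 0 < p - 1 := by linarith
  have hx : 0 < m / (p - 1) := div_pos hm hp1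
  have hβ0 : 0 < β := hβ ▸ Real.rpow_pos_of_pos hx _
  set a := ((N : ℝ) - 1) / (p * (p - 1))
  obtain ⟨R, hR0, hR⟩ := exists_radial_flow_of_eq_profile (a := a) (γ := γ) hβ0 hδ.1 hv
  refine ⟨R, hR0, radialPotential p m ((N : ℝ) - 1) (decayRate a β γ δ) (decayRateDeriv a γ δ),
    fun r hr => ?_, ?_⟩
  · obtain ⟨hflow, hgr⟩ := hR r hr
    obtain ⟨hvr, hv0, hg0⟩ := hflow.self_of_nhds
    exact ⟨hv0, hvr.deriv ▸ neg_neg_of_pos (mul_pos hv0 hg0), radial_pLaplacian_eq hflow hgr⟩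
  · have hβp : (m / (p - 1)) ^ ((p - 1) / p) = β ^ (p - 1) := by
      rw [hβ, ← Real.rpow_mul hx.le]
      field_simp
    have hmβ : m = (p - 1) * β ^ p := by
      rw [hβ, ← Real.rpow_mul hx.le, one_div_mul_cancel (by positivity), Real.rpow_one]
      field_simp
    rw [hβp]
    exact radialPotential_sub_isBigO hβ0 hδ.1 hδ.2.le hmβ (mul_div_cancel₀ _ (by positivity)).symm

theorem stmt_12
    (N : ℕ) (hN : 2 ≤ N) (p m γ δ : ℝ)
    (hp : 1 < p) (hm : 0 < m) (hδ : 0 < δ ∧ δ < 1 / 2)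
    (β : ℝ) (hβ : β = (m / (p - 1)) ^ ((1 : ℝ) / p))
    (v : ℝ → ℝ)
    (hv : ∀ r : ℝ, 0 < r →
      v r = r ^ (-(((N : ℝ) - 1) / (p * (p - 1)))) * Real.exp (-β * r) *
        (1 - γ * r ^ (-δ))) :
    ∃ R : ℝ, 0 < R ∧ ∃ Q : ℝ → ℝ,
      (∀ r : ℝ, R < r →
        0 < v r ∧ deriv v r < 0 ∧
        -(deriv (fun s : ℝ => |deriv v s| ^ (p - 2) * deriv v s) r)
            - (((N : ℝ) - 1) / r) * (|deriv v r| ^ (p - 2) * deriv v r)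
            + m * v r ^ (p - 1)
          = Q r * v r ^ (p - 1)) ∧
      (fun r : ℝ =>
          Q r - (m / (p - 1)) ^ ((p - 1) / p) * p * (p - 1) * δ * γ * r ^ (-(δ + 1)))
        =O[atTop] fun r : ℝ => r ^ (-(2 * δ + 1)) :=
  stmt_12_general N p m γ δ hp hm hδ β hβ v hv
end

section
/- Let N ≥ 2 be an integer and let p, μ be real numbers with 1 < p < N and 0 < μ < μ̄ := ((N−p)/p)^p; let δ > 0 and ε > 0. Let γ₁ be the unique zero of Γ_μ in [0, (N−p)/p), define k(t) = (p−1)t² − (N−p)t and h(t) = |γ₁ − (γ₁−ε)t|^{p−2}·(k(γ₁−ε)·t − k(γ₁)) − μ·|1−t|^{p−2}·(1−t), and set w₀(r) = r^{−γ₁}·(1 + δ·r^{ε}). Then for every r > 0 with γ₁ + (γ₁−ε)·δ·r^{ε} > 0, one has −d/dr(|w₀'(r)|^{p−2}·w₀'(r)) − ((N−1)/r)·|w₀'(r)|^{p−2}·w₀'(r) − (μ/r^p)·w₀(r)^{p−1} = [h(−δ·r^{ε}) / ((1 + δ·r^{ε})^{p−1}·r^{p})]·w₀(r)^{p−1}.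 -/
open Filter Topology Set

theorem stmt_14
    (N : ℕ) (hN : 2 ≤ N) (p μ : ℝ)
    (hp1 : 1 < p) (hpN : p < N)
    (hμ0 : 0 < μ) (hμ : μ < (((N : ℝ) - p) / p) ^ p)
    (δ ε : ℝ) (hδ : 0 < δ) (hε : 0 < ε)
    (γ₁ : ℝ)
    (hγ₁ : 0 ≤ γ₁ ∧ γ₁ < ((N : ℝ) - p) / p ∧
      γ₁ ^ (p - 1) * ((p - 1) * γ₁ - ((N : ℝ) - p)) + μ = 0)
    (k h : ℝ → ℝ)
    (hk : ∀ t : ℝ, k t = (p - 1) * t ^ 2 - ((N : ℝ) - p) * t)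
    (hh : ∀ t : ℝ, h t =
      |γ₁ - (γ₁ - ε) * t| ^ (p - 2) * (k (γ₁ - ε) * t - k γ₁)
        - μ * |1 - t| ^ (p - 2) * (1 - t))
    (w₀ : ℝ → ℝ)
    (hw₀ : ∀ r : ℝ, 0 < r → w₀ r = r ^ (-γ₁) * (1 + δ * r ^ ε)) :
    ∀ r : ℝ, 0 < r → 0 < γ₁ + (γ₁ - ε) * δ * r ^ ε →
      -(deriv (fun s : ℝ => |deriv w₀ s| ^ (p - 2) * deriv w₀ s) r)
          - (((N : ℝ) - 1) / r) * (|deriv w₀ r| ^ (p - 2) * deriv w₀ r)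
          - (μ / r ^ p) * w₀ r ^ (p - 1)
        = (h (-(δ * r ^ ε)) / ((1 + δ * r ^ ε) ^ (p - 1) * r ^ p)) * w₀ r ^ (p - 1) := by
  intro r hr hA
  set E : ℝ → ℝ := fun s => γ₁ + (γ₁ - ε) * δ * s ^ ε with hE
  have hAE : 0 < E r := hA
  -- derivative of w₀ at positive points
  have hderiv : ∀ s : ℝ, 0 < s → deriv w₀ s = -(s ^ (-γ₁ - 1) * E s) := by
    intro s hs
    have hev : w₀ =ᶠ[𝓝 s] fun t => t ^ (-γ₁) + δ * t ^ (ε - γ₁) := by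
      filter_upwards [eventually_gt_nhds hs] with t ht
      have h1 : t ^ (ε - γ₁) = t ^ ε * t ^ (-γ₁) := by
        rw [sub_eq_add_neg, Real.rpow_add ht]
      rw [hw₀ t ht, h1]; ring
    have hd1 : HasDerivAt (fun t : ℝ => t ^ (-γ₁)) ((-γ₁) * s ^ (-γ₁ - 1)) s :=
      Real.hasDerivAt_rpow_const (Or.inl hs.ne')
    have hd2 : HasDerivAt (fun t : ℝ => t ^ (ε - γ₁)) ((ε - γ₁) * s ^ (ε - γ₁ - 1)) s :=
      Real.hasDerivAt_rpow_const (Or.inl hs.ne')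
    have hd : HasDerivAt w₀ ((-γ₁) * s ^ (-γ₁ - 1) + δ * ((ε - γ₁) * s ^ (ε - γ₁ - 1))) s :=
      (hd1.add (hd2.const_mul δ)).congr_of_eventuallyEq hev
    rw [hd.deriv]
    have h2 : s ^ (ε - γ₁ - 1) = s ^ ε * s ^ (-γ₁ - 1) := by
      rw [show ε - γ₁ - 1 = ε + (-γ₁ - 1) by ring, Real.rpow_add hs]
    rw [h2, hE]; ring
  -- continuity / positivity of E near r
  have hEc : ContinuousAt E r :=
    continuousAt_const.add ((Real.continuousAt_rpow_const r ε (Or.inl hr.ne')).const_mul _)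
  have hEpos : ∀ᶠ s in 𝓝 r, 0 < E s := hEc.eventually (eventually_gt_nhds hAE)
  -- the flux function near r
  have hGev : (fun s : ℝ => |deriv w₀ s| ^ (p - 2) * deriv w₀ s)
      =ᶠ[𝓝 r] fun s => -(s ^ ((-γ₁ - 1) * (p - 1)) * (E s) ^ (p - 1)) := by
    filter_upwards [eventually_gt_nhds hr, hEpos] with s hs hEs
    have hsp : 0 < s ^ (-γ₁ - 1) := Real.rpow_pos_of_pos hs _
    have hB : 0 < s ^ (-γ₁ - 1) * E s := mul_pos hsp hEs
    rw [hderiv s hs, abs_neg, abs_of_pos hB]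
    have h3 : (s ^ (-γ₁ - 1) * E s) ^ (p - 2) * (s ^ (-γ₁ - 1) * E s)
        = (s ^ (-γ₁ - 1) * E s) ^ (p - 1) := by
      rw [← Real.rpow_add_one hB.ne']; congr 1; ring
    have h4 : (s ^ (-γ₁ - 1) * E s) ^ (p - 1)
        = s ^ ((-γ₁ - 1) * (p - 1)) * (E s) ^ (p - 1) := by
      rw [Real.mul_rpow hsp.le hEs.le, ← Real.rpow_mul hs.le]
    rw [mul_neg, h3, h4]
  -- derivative of the flux function
  have hd1 : HasDerivAt (fun s : ℝ => s ^ ((-γ₁ - 1) * (p - 1)))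
      (((-γ₁ - 1) * (p - 1)) * r ^ ((-γ₁ - 1) * (p - 1) - 1)) r :=
    Real.hasDerivAt_rpow_const (Or.inl hr.ne')
  have hd2 : HasDerivAt E ((γ₁ - ε) * δ * (ε * r ^ (ε - 1))) r := by
    have := ((Real.hasDerivAt_rpow_const (p := ε) (Or.inl hr.ne')).const_mul
      ((γ₁ - ε) * δ)).const_add γ₁
    simpa [hE, mul_comm, mul_assoc, mul_left_comm] using this
  have hd3 : HasDerivAt (fun s => (E s) ^ (p - 1))
      ((γ₁ - ε) * δ * (ε * r ^ (ε - 1)) * (p - 1) * (E r) ^ (p - 1 - 1)) r :=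
    hd2.rpow_const (Or.inl hAE.ne')
  have hD : HasDerivAt (fun s : ℝ => -(s ^ ((-γ₁ - 1) * (p - 1)) * (E s) ^ (p - 1)))
      (-(((-γ₁ - 1) * (p - 1)) * r ^ ((-γ₁ - 1) * (p - 1) - 1) * (E r) ^ (p - 1)
        + r ^ ((-γ₁ - 1) * (p - 1)) *
          ((γ₁ - ε) * δ * (ε * r ^ (ε - 1)) * (p - 1) * (E r) ^ (p - 1 - 1)))) r :=
    (hd1.mul hd3).neg
  have hderivG : deriv (fun s : ℝ => |deriv w₀ s| ^ (p - 2) * deriv w₀ s) r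
      = -(((-γ₁ - 1) * (p - 1)) * r ^ ((-γ₁ - 1) * (p - 1) - 1) * (E r) ^ (p - 1)
        + r ^ ((-γ₁ - 1) * (p - 1)) *
          ((γ₁ - ε) * δ * (ε * r ^ (ε - 1)) * (p - 1) * (E r) ^ (p - 1 - 1))) := by
    rw [hGev.deriv_eq, hD.deriv]
  have hGr : |deriv w₀ r| ^ (p - 2) * deriv w₀ r
      = -(r ^ ((-γ₁ - 1) * (p - 1)) * (E r) ^ (p - 1)) := hGev.eq_of_nhds
  -- abbreviations for powers
  have hrε : 0 < r ^ ε := Real.rpow_pos_of_pos hr ε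
  have hu : 0 < 1 + δ * r ^ ε := by positivity
  have hP : 0 < r ^ p := Real.rpow_pos_of_pos hr p
  have hU : 0 < (1 + δ * r ^ ε) ^ (p - 1) := Real.rpow_pos_of_pos hu _
  -- rewrite the h term
  have hhval : h (-(δ * r ^ ε)) =
      (E r) ^ (p - 2) * (k (γ₁ - ε) * (-(δ * r ^ ε)) - k γ₁)
        - μ * (1 + δ * r ^ ε) ^ (p - 2) * (1 + δ * r ^ ε) := by
    rw [hh]
    have e1 : γ₁ - (γ₁ - ε) * (-(δ * r ^ ε)) = E r := by rw [hE]; ring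
    have e2 : (1 : ℝ) - (-(δ * r ^ ε)) = 1 + δ * r ^ ε := by ring
    rw [e1, e2, abs_of_pos hAE, abs_of_pos hu]
  have hu2 : (1 + δ * r ^ ε) ^ (p - 2) * (1 + δ * r ^ ε) = (1 + δ * r ^ ε) ^ (p - 1) := by
    rw [← Real.rpow_add_one hu.ne']; congr 1; ring
  -- key rpow identities
  set X := r ^ (-γ₁ * (p - 1) - p) with hX
  have hXpos : 0 < X := Real.rpow_pos_of_pos hr _
  have i1 : r ^ ((-γ₁ - 1) * (p - 1) - 1) = X := by
    rw [hX]; congr 1; ring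
  have i2 : r ^ ((-γ₁ - 1) * (p - 1)) = X * r := by
    rw [hX, ← Real.rpow_add_one hr.ne']; congr 1; ring
  have i3 : (E r) ^ (p - 1) = (E r) ^ (p - 2) * E r := by
    rw [← Real.rpow_add_one hAE.ne']; congr 1; ring
  have i4 : (E r) ^ (p - 1 - 1) = (E r) ^ (p - 2) := by congr 1; ring
  have i5 : r ^ (ε - 1) = r ^ ε / r := by
    rw [show ε - 1 = ε + (-1 : ℝ) by ring, Real.rpow_add hr, Real.rpow_neg_one]
    field_simp
  have i6 : w₀ r ^ (p - 1) = X * r ^ p * (1 + δ * r ^ ε) ^ (p - 1) := by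
    rw [hw₀ r hr, Real.mul_rpow (Real.rpow_pos_of_pos hr _).le hu.le,
      ← Real.rpow_mul hr.le, hX, ← Real.rpow_add hr]
    congr 2; ring
  have hu2' : μ * (1 + δ * r ^ ε) ^ (p - 2) * (1 + δ * r ^ ε)
      = μ * (1 + δ * r ^ ε) ^ (p - 1) := by rw [mul_assoc, hu2]
  -- finish
  rw [hderivG, hGr, hhval, hu2', hk, hk, i1, i2, i3, i4, i5, i6]
  have hEr : E r = γ₁ + (γ₁ - ε) * δ * r ^ ε := rfl
  rw [hEr]
  field_simp
  ring
end

section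
/- Let N ≥ 2 be an integer and let p, μ be real numbers with 1 < p < N and 0 ≤ μ < μ̄ := ((N−p)/p)^p. Define Γ_μ(γ) = γ^{p−1}((p−1)γ − (N−p)) + μ for γ ≥ 0. Then the equation Γ_μ(γ) = 0 has exactly two solutions γ₁ and γ₂ in [0,∞), and they satisfy 0 ≤ γ₁ < (N−p)/p < γ₂ ≤ (N−p)/(p−1). -/
/-! Write `Γ₀(γ) = γ^(p-1) ((p-1)γ - A)` with `A = N - p`, so that `Γ_μ = Γ₀ + μ`. For `γ > 0`,
`Γ₀'(γ) = (p-1) γ^(p-2) (pγ - A)`, so `Γ₀` strictly decreases on `[0, A/p]` from `Γ₀(0) = 0` to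
`Γ₀(A/p) = -(A/p)^p = -μ̄` and then strictly increases, reaching `0` again at `A/(p-1)`. Since
`-μ̄ < -μ ≤ 0`, the intermediate value theorem gives one root of `Γ_μ` on each branch, and strict
monotonicity makes each of them unique. -/

open Set

namespace HardyIndicial

variable {p A : ℝ}

noncomputable def indicial (p A γ : ℝ) : ℝ := γ ^ (p - 1) * ((p - 1) * γ - A)

lemma continuous_indicial (hp : 1 ≤ p) : Continuous (indicial p A) :=
  (Real.continuous_rpow_const (by linarith)).mul (by fun_prop)

lemma hasDerivAt_indicial {x : ℝ} (hx : 0 < x) :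
    HasDerivAt (indicial p A) ((p - 1) * x ^ (p - 2) * (p * x - A)) x := by
  have hpow : HasDerivAt (fun y : ℝ => y ^ (p - 1)) ((p - 1) * x ^ (p - 2)) x := by
    simpa [sub_sub, one_add_one_eq_two] using
      Real.hasDerivAt_rpow_const (p := p - 1) (Or.inl hx.ne')
  have hsplit : x ^ (p - 1) = x ^ (p - 2) * x := by
    rw [← Real.rpow_add_one hx.ne']
    ring_nf
  refine (hpow.mul (((hasDerivAt_id x).const_mul (p - 1)).sub_const A)).congr_deriv ?_
  rw [hsplit, id]
  ring

lemma strictAntiOn_indicial (hp : 1 < p) : StrictAntiOn (indicial p A) (Icc 0 (A / p)) := by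
  refine strictAntiOn_of_deriv_neg (convex_Icc 0 _) (continuous_indicial hp.le).continuousOn ?_
  intro x hx
  rw [interior_Icc] at hx
  obtain ⟨hx0, hxc⟩ := hx
  have hxA : x * p < A := (lt_div_iff₀ (by linarith)).mp hxc
  rw [(hasDerivAt_indicial hx0).deriv]
  exact mul_neg_of_pos_of_neg (by have := Real.rpow_pos_of_pos hx0 (p - 2); positivity)
    (by linarith)

lemma strictMonoOn_indicial (hp : 1 < p) (hA : 0 ≤ A) :
    StrictMonoOn (indicial p A) (Ici (A / p)) := by
  refine strictMonoOn_of_deriv_pos (convex_Ici _) (continuous_indicial hp.le).continuousOn ?_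
  intro x hx
  rw [interior_Ici] at hx
  have hx0 : 0 < x := lt_of_le_of_lt (by positivity) hx
  have hxA : A < x * p := (div_lt_iff₀ (by linarith)).mp hx
  rw [(hasDerivAt_indicial hx0).deriv]
  exact mul_pos (by have := Real.rpow_pos_of_pos hx0 (p - 2); positivity) (by linarith)

lemma indicial_zero (hp : p ≠ 1) : indicial p A 0 = 0 := by
  simp [indicial, Real.zero_rpow (sub_ne_zero.mpr hp)]

lemma indicial_div_self (hp : 0 < p) (hA : 0 ≤ A) : indicial p A (A / p) = -(A / p) ^ p := by
  have hlin : (p - 1) * (A / p) - A = -(A / p) := by field_simp; ring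
  rw [indicial, hlin, mul_neg, ← Real.rpow_add_one' (by positivity) (by simpa using hp.ne'),
    sub_add_cancel]

lemma indicial_div_sub_one (hp : p ≠ 1) : indicial p A (A / (p - 1)) = 0 := by
  have hp1 : p - 1 ≠ 0 := sub_ne_zero.mpr hp
  simp [indicial, mul_div_cancel₀ A hp1]

variable {μ : ℝ}

lemma exists_indicial_eq_neg_mem_Ico (hp : 1 < p) (hA : 0 ≤ A) (hμ0 : 0 ≤ μ)
    (hμ : μ < (A / p) ^ p) : ∃ γ ∈ Ico 0 (A / p), indicial p A γ = -μ :=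
  intermediate_value_Ico' (by positivity) (continuous_indicial hp.le).continuousOn
    ⟨by rw [indicial_div_self (by linarith) hA]; linarith, by rw [indicial_zero hp.ne']; linarith⟩

lemma exists_indicial_eq_neg_mem_Ioc (hp : 1 < p) (hA : 0 ≤ A) (hμ0 : 0 ≤ μ)
    (hμ : μ < (A / p) ^ p) : ∃ γ ∈ Ioc (A / p) (A / (p - 1)), indicial p A γ = -μ :=
  intermediate_value_Ioc (div_le_div_of_nonneg_left hA (by linarith) (by linarith))
    (continuous_indicial hp.le).continuousOn
    ⟨by rw [indicial_div_self (by linarith) hA]; linarith,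
      by rw [indicial_div_sub_one hp.ne']; linarith⟩

lemma eq_or_eq_of_indicial_eq (hp : 1 < p) (hA : 0 ≤ A) {γ γ₁ γ₂ : ℝ} (hγ : 0 ≤ γ)
    (hγ₁ : γ₁ ∈ Icc 0 (A / p)) (hγ₂ : A / p ≤ γ₂) (h₁ : indicial p A γ = indicial p A γ₁)
    (h₂ : indicial p A γ = indicial p A γ₂) : γ = γ₁ ∨ γ = γ₂ := by
  rcases le_total γ (A / p) with h | h
  · exact Or.inl ((strictAntiOn_indicial hp).injOn ⟨hγ, h⟩ hγ₁ h₁)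
  · exact Or.inr ((strictMonoOn_indicial hp hA).injOn h hγ₂ h₂)

end HardyIndicial

open HardyIndicial in
theorem stmt_15_general
    (N : ℕ) (p μ : ℝ)
    (hp1 : 1 < p) (hpN : p < N)
    (hμ0 : 0 ≤ μ) (hμ : μ < (((N : ℝ) - p) / p) ^ p) :
    ∃ γ₁ γ₂ : ℝ,
      0 ≤ γ₁ ∧ γ₁ < ((N : ℝ) - p) / p ∧
      ((N : ℝ) - p) / p < γ₂ ∧ γ₂ ≤ ((N : ℝ) - p) / (p - 1) ∧
      γ₁ ^ (p - 1) * ((p - 1) * γ₁ - ((N : ℝ) - p)) + μ = 0 ∧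
      γ₂ ^ (p - 1) * ((p - 1) * γ₂ - ((N : ℝ) - p)) + μ = 0 ∧
      ∀ γ : ℝ, 0 ≤ γ →
        γ ^ (p - 1) * ((p - 1) * γ - ((N : ℝ) - p)) + μ = 0 →
        γ = γ₁ ∨ γ = γ₂ := by
  have hA : 0 ≤ (N : ℝ) - p := sub_nonneg.mpr hpN.le
  obtain ⟨γ₁, ⟨hγ₁0, hγ₁c⟩, hΓ₁⟩ := exists_indicial_eq_neg_mem_Ico hp1 hA hμ0 hμ
  obtain ⟨γ₂, ⟨hγ₂c, hγ₂d⟩, hΓ₂⟩ := exists_indicial_eq_neg_mem_Ioc hp1 hA hμ0 hμ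
  refine ⟨γ₁, γ₂, hγ₁0, hγ₁c, hγ₂c, hγ₂d, ?_, ?_, fun γ hγ hΓ => ?_⟩
  · exact eq_neg_iff_add_eq_zero.mp hΓ₁
  · exact eq_neg_iff_add_eq_zero.mp hΓ₂
  · have hΓ : indicial p ((N : ℝ) - p) γ = -μ := eq_neg_iff_add_eq_zero.mpr hΓ
    exact eq_or_eq_of_indicial_eq hp1 hA hγ ⟨hγ₁0, hγ₁c.le⟩ hγ₂c.le
      (hΓ.trans hΓ₁.symm) (hΓ.trans hΓ₂.symm)

theorem stmt_15
    (N : ℕ) (hN : 2 ≤ N) (p μ : ℝ)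
    (hp1 : 1 < p) (hpN : p < N)
    (hμ0 : 0 ≤ μ) (hμ : μ < (((N : ℝ) - p) / p) ^ p) :
    ∃ γ₁ γ₂ : ℝ,
      0 ≤ γ₁ ∧ γ₁ < ((N : ℝ) - p) / p ∧
      ((N : ℝ) - p) / p < γ₂ ∧ γ₂ ≤ ((N : ℝ) - p) / (p - 1) ∧
      γ₁ ^ (p - 1) * ((p - 1) * γ₁ - ((N : ℝ) - p)) + μ = 0 ∧
      γ₂ ^ (p - 1) * ((p - 1) * γ₂ - ((N : ℝ) - p)) + μ = 0 ∧
      ∀ γ : ℝ, 0 ≤ γ →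
        γ ^ (p - 1) * ((p - 1) * γ - ((N : ℝ) - p)) + μ = 0 →
        γ = γ₁ ∨ γ = γ₂ :=
  stmt_15_general N p μ hp1 hpN hμ0 hμ
end
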